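/- arXiv:1410.7404 — 6 statements merged into one kernel-verified Lean document; each statement's English description precedes it below -/
import Mathlib

section
/- (Basic Decomposition of Information) If Y = (Y_1,...,Y_m) is a representation of X = (X_1,...,X_n), then TC(X) ≥ TC(X;Y) and TC(X;Y) = TC(Y) + TC_L(X;Y), where TC_L(X;Y) := Σ_{i=1}^n I(Y:X_i) − Σ_{j=1}^m I(Y_j:X). -/
open Finset

/-- Probability that the random variable `f` (on finite sample space `Ω` with pmf `p`)
takes the value `a`. -/
noncomputable def prob {Ω α : Type} [Fintype Ω] [DecidableEq α]
    (p : Ω → ℝ) (f : Ω → α) (a : α) : ℝ :=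
  ∑ ω : Ω, if f ω = a then p ω else 0

/-- Shannon entropy (in nats) of the random variable `f`. -/
noncomputable def ent {Ω α : Type} [Fintype Ω] [Fintype α] [DecidableEq α]
    (p : Ω → ℝ) (f : Ω → α) : ℝ :=
  -∑ a : α, prob p f a * Real.log (prob p f a)

/-- Mutual information `I(f : g)`. -/
noncomputable def mi {Ω α β : Type} [Fintype Ω] [Fintype α] [DecidableEq α]
    [Fintype β] [DecidableEq β] (p : Ω → ℝ) (f : Ω → α) (g : Ω → β) : ℝ :=
  ent p f + ent p g - ent p (fun ω => (f ω, g ω))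

/-- Conditional entropy `H(f | g)`. -/
noncomputable def condEnt {Ω α β : Type} [Fintype Ω] [Fintype α] [DecidableEq α]
    [Fintype β] [DecidableEq β] (p : Ω → ℝ) (f : Ω → α) (g : Ω → β) : ℝ :=
  ent p (fun ω => (f ω, g ω)) - ent p g

/-- Conditional mutual information `I(f : g | h)`. -/
noncomputable def condMI {Ω α β γ : Type} [Fintype Ω] [Fintype α] [DecidableEq α]
    [Fintype β] [DecidableEq β] [Fintype γ] [DecidableEq γ]
    (p : Ω → ℝ) (f : Ω → α) (g : Ω → β) (h : Ω → γ) : ℝ :=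
  condEnt p f h + condEnt p g h - condEnt p (fun ω => (f ω, g ω)) h

/-- The joint random variable of a finite family of random variables. -/
def joint {Ω : Type} {n : ℕ} {V : Fin n → Type} (X : ∀ i, Ω → V i) : Ω → (∀ i, V i) :=
  fun ω i => X i ω

/-- Total correlation `TC(X) = ∑ᵢ H(Xᵢ) − H(X)`. -/
noncomputable def tc {Ω : Type} [Fintype Ω] {n : ℕ} {V : Fin n → Type}
    [∀ i, Fintype (V i)] [∀ i, DecidableEq (V i)]
    (p : Ω → ℝ) (X : ∀ i, Ω → V i) : ℝ :=
  (∑ i, ent p (X i)) - ent p (joint X)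

/-- Conditional total correlation `TC(X|g) = ∑ᵢ H(Xᵢ|g) − H(X|g)`. -/
noncomputable def tcCond {Ω : Type} [Fintype Ω] {n : ℕ} {V : Fin n → Type}
    [∀ i, Fintype (V i)] [∀ i, DecidableEq (V i)]
    {β : Type} [Fintype β] [DecidableEq β]
    (p : Ω → ℝ) (X : ∀ i, Ω → V i) (g : Ω → β) : ℝ :=
  (∑ i, condEnt p (X i) g) - condEnt p (joint X) g

/-- `Y = (Y₁,…,Y_m)` is a representation of (the random variable) `f`:
the `Yⱼ` are conditionally independent given `f`, i.e.
`p(a,y) = p(a) ∏ⱼ p(yⱼ|a)`, written multiplicatively to avoid division: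
`p(a)^(m-1) · p(a,y) = ∏ⱼ p(a,yⱼ)`. -/
def IsRepresentation {Ω : Type} [Fintype Ω] {α : Type} [DecidableEq α]
    {m : ℕ} {W : Fin m → Type} [∀ j, DecidableEq (W j)]
    (p : Ω → ℝ) (f : Ω → α) (Y : ∀ j, Ω → W j) : Prop :=
  ∀ (a : α) (y : ∀ j, W j),
    prob p f a ^ (m - 1) * prob p (fun ω => (f ω, joint Y ω)) (a, y)
      = ∏ j, prob p (fun ω => (f ω, Y j ω)) (a, y j)

/-- `TC_L(X;Y) = ∑ᵢ I(Y:Xᵢ) − ∑ⱼ I(Yⱼ:X)`. -/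
noncomputable def tcL {Ω : Type} [Fintype Ω] {n m : ℕ}
    {V : Fin n → Type} [∀ i, Fintype (V i)] [∀ i, DecidableEq (V i)]
    {W : Fin m → Type} [∀ j, Fintype (W j)] [∀ j, DecidableEq (W j)]
    (p : Ω → ℝ) (X : ∀ i, Ω → V i) (Y : ∀ j, Ω → W j) : ℝ :=
  (∑ i, mi p (joint Y) (X i)) - ∑ j, mi p (Y j) (joint X)


set_option linter.unusedSectionVars false

section myHelpers
variable {Ω α β : Type} [Fintype Ω] [Fintype α] [DecidableEq α] [Fintype β] [DecidableEq β]
variable {p : Ω → ℝ}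

lemma my_prob_nonneg (hp0 : ∀ ω, 0 ≤ p ω) (f : Ω → α) (a : α) : 0 ≤ prob p f a := by
  unfold prob
  exact Finset.sum_nonneg fun ω _ => by split <;> [exact hp0 ω; exact le_rfl]

lemma my_le_prob (hp0 : ∀ ω, 0 ≤ p ω) (f : Ω → α) {ω : Ω} {a : α} (h : f ω = a) :
    p ω ≤ prob p f a := by
  unfold prob
  have := Finset.single_le_sum (f := fun ω' => if f ω' = a then p ω' else 0)
    (fun i _ => by split <;> [exact hp0 i; exact le_rfl]) (mem_univ ω)
  simpa [h] using this

lemma my_exists_of_prob_pos {f : Ω → α} {a : α} (hp0 : ∀ ω, 0 ≤ p ω)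
    (h : 0 < prob p f a) : ∃ ω, 0 < p ω ∧ f ω = a := by
  by_contra hc
  push_neg at hc
  have : prob p f a = 0 := by
    unfold prob
    refine Finset.sum_eq_zero fun ω _ => ?_
    by_cases hfa : f ω = a
    · rcases lt_or_eq_of_le (hp0 ω) with h'|h'
      · exact absurd hfa (hc ω h')
      · simp [hfa, ← h']
    · simp [hfa]
  simp [this] at h

lemma my_sum_prob_mul (f : Ω → α) (g : α → ℝ) :
    ∑ a, prob p f a * g a = ∑ ω, p ω * g (f ω) := by
  unfold prob
  simp_rw [Finset.sum_mul, ite_mul, zero_mul]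
  rw [Finset.sum_comm]
  refine Finset.sum_congr rfl fun ω _ => ?_
  rw [Finset.sum_ite_eq univ (f ω) (fun a => p ω * g a)]
  simp

lemma my_sum_prob (hp1 : ∑ ω, p ω = 1) (f : Ω → α) : ∑ a, prob p f a = 1 := by
  have := my_sum_prob_mul (p := p) f (fun _ => 1)
  simpa [hp1] using this

lemma my_ent_eq (f : Ω → α) :
    ent p f = -∑ ω, p ω * Real.log (prob p f (f ω)) := by
  unfold ent
  rw [my_sum_prob_mul f (fun a => Real.log (prob p f a))]

lemma my_prob_pair_comm (f : Ω → α) (g : Ω → β) (a : α) (b : β) :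
    prob p (fun ω => (f ω, g ω)) (a, b) = prob p (fun ω => (g ω, f ω)) (b, a) := by
  unfold prob
  refine Finset.sum_congr rfl fun ω _ => ?_
  simp [Prod.ext_iff, and_comm]

lemma my_ent_pair_comm (f : Ω → α) (g : Ω → β) :
    ent p (fun ω => (f ω, g ω)) = ent p (fun ω => (g ω, f ω)) := by
  rw [my_ent_eq, my_ent_eq]
  refine congrArg _ (Finset.sum_congr rfl fun ω _ => ?_)
  rw [my_prob_pair_comm]

lemma my_marg_fst (f : Ω → α) (g : Ω → β) (b : β) :
    ∑ a, prob p (fun ω => (f ω, g ω)) (a, b) = prob p g b := by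
  unfold prob
  rw [Finset.sum_comm]
  refine Finset.sum_congr rfl fun ω _ => ?_
  simp_rw [Prod.ext_iff, ite_and]
  rw [Finset.sum_ite_eq univ (f ω) (fun _ => if g ω = b then p ω else 0)]
  simp

lemma my_gibbs {ι : Type} [Fintype ι] (P Q : ι → ℝ) (hP0 : ∀ i, 0 ≤ P i) (hQ0 : ∀ i, 0 ≤ Q i)
    (hPQ : ∀ i, 0 < P i → 0 < Q i) (hsum : ∑ i, Q i ≤ ∑ i, P i) :
    0 ≤ ∑ i, P i * (Real.log (P i) - Real.log (Q i)) := by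
  have h1 : ∀ i, P i - Q i ≤ P i * (Real.log (P i) - Real.log (Q i)) := by
    intro i
    rcases eq_or_lt_of_le (hP0 i) with h|h
    · rw [← h]
      simpa using hQ0 i
    · have hq := hPQ i h
      have hlog := Real.log_le_sub_one_of_pos (x := Q i / P i) (by positivity)
      rw [Real.log_div (ne_of_gt hq) (ne_of_gt h)] at hlog
      have h2 := mul_le_mul_of_nonneg_left hlog (le_of_lt h)
      have h3 : P i * (Q i / P i - 1) = Q i - P i := by field_simp
      nlinarith
  calc (0:ℝ) ≤ ∑ i, (P i - Q i) := by rw [Finset.sum_sub_distrib]; linarith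
    _ ≤ _ := Finset.sum_le_sum fun i _ => h1 i

end myHelpers

lemma my_tcCond_nonneg {Ω : Type} [Fintype Ω] {n : ℕ} {V : Fin n → Type}
    [∀ i, Fintype (V i)] [∀ i, DecidableEq (V i)]
    {β : Type} [Fintype β] [DecidableEq β]
    (p : Ω → ℝ) (hp0 : ∀ ω, 0 ≤ p ω) (hp1 : ∑ ω, p ω = 1)
    (X : ∀ i, Ω → V i) (g : Ω → β) :
    0 ≤ tcCond p X g := by
  classical
  set F : Ω → (∀ i, V i) × β := fun ω => (joint X ω, g ω) with hF
  set P : ((∀ i, V i) × β) → ℝ := prob p F with hPdef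
  set PY : β → ℝ := prob p g with hPYdef
  set Pm : ∀ i, (V i × β) → ℝ := fun i => prob p (fun ω => (X i ω, g ω)) with hPmdef
  set Q : ((∀ i, V i) × β) → ℝ := fun z => PY z.2 * ∏ i, (Pm i (z.1 i, z.2) / PY z.2)
    with hQdef
  have hPsum : ∑ z, P z = 1 := my_sum_prob hp1 F
  have hbQ : ∀ b, ∑ a : (∀ i, V i), Q (a, b) = PY b := by
    intro b
    by_cases h0 : PY b = 0
    · simp [hQdef, h0]
    · have hmarg : ∀ i, ∑ v, Pm i (v, b) = PY b := fun i => my_marg_fst (X i) g b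
      calc ∑ a : (∀ i, V i), Q (a, b)
          = PY b * ∑ a : (∀ i, V i), ∏ i, (Pm i (a i, b) / PY b) := by
            rw [Finset.mul_sum]
        _ = PY b * ∏ i, ∑ v, (Pm i (v, b) / PY b) := by
            rw [← Fintype.prod_sum (fun i v => Pm i (v, b) / PY b)]
        _ = PY b := by
            simp_rw [← Finset.sum_div, hmarg, div_self h0]
            simp
  have hQsum : ∑ z, Q z = 1 := by
    rw [Fintype.sum_prod_type, Finset.sum_comm]
    rw [Finset.sum_congr rfl fun b _ => hbQ b]
    exact my_sum_prob hp1 g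
  have hP0 : ∀ z, 0 ≤ P z := fun z => my_prob_nonneg hp0 F z
  have hQ0 : ∀ z, 0 ≤ Q z := by
    intro z
    refine mul_nonneg (my_prob_nonneg hp0 g z.2) (Finset.prod_nonneg fun i _ => ?_)
    exact div_nonneg (my_prob_nonneg hp0 _ _) (my_prob_nonneg hp0 g z.2)
  have hcomp : ∀ z, 0 < P z → 0 < PY z.2 ∧ ∀ i, 0 < Pm i (z.1 i, z.2) := by
    intro z hz
    obtain ⟨ω, hω, hωz⟩ := my_exists_of_prob_pos hp0 hz
    have hg : g ω = z.2 := congrArg Prod.snd hωz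
    have hX : ∀ i, X i ω = z.1 i := fun i => congrFun (congrArg Prod.fst hωz) i
    exact ⟨lt_of_lt_of_le hω (my_le_prob hp0 g hg),
      fun i => lt_of_lt_of_le hω (my_le_prob hp0 _ (by rw [hX i, hg]))⟩
  have hPQ : ∀ z, 0 < P z → 0 < Q z := by
    intro z hz
    obtain ⟨h1, h2⟩ := hcomp z hz
    exact mul_pos h1 (Finset.prod_pos fun i _ => div_pos (h2 i) h1)
  have hgibbs := my_gibbs P Q hP0 hQ0 hPQ (by rw [hPsum, hQsum])
  have hexp : ∀ z, P z * (Real.log (P z) - Real.log (Q z))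
      = P z * Real.log (P z)
        - P z * ((1 - (n:ℝ)) * Real.log (PY z.2) + ∑ i, Real.log (Pm i (z.1 i, z.2))) := by
    intro z
    rcases eq_or_lt_of_le (hP0 z) with h|h
    · rw [← h]; ring
    · obtain ⟨h1, h2⟩ := hcomp z h
      have hlogQ : Real.log (Q z)
          = (1 - (n:ℝ)) * Real.log (PY z.2) + ∑ i, Real.log (Pm i (z.1 i, z.2)) := by
        rw [hQdef]
        dsimp only
        rw [Real.log_mul (ne_of_gt h1)
          (ne_of_gt (Finset.prod_pos fun i _ => div_pos (h2 i) h1)),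
          Real.log_prod (fun i _ => ne_of_gt (div_pos (h2 i) h1))]
        rw [Finset.sum_congr rfl fun i _ => Real.log_div (ne_of_gt (h2 i)) (ne_of_gt h1)]
        rw [Finset.sum_sub_distrib, Finset.sum_const, Finset.card_univ, Fintype.card_fin,
          nsmul_eq_mul]
        ring
      rw [hlogQ]; ring
  rw [Finset.sum_congr rfl fun z _ => hexp z] at hgibbs
  rw [Finset.sum_sub_distrib] at hgibbs
  have e1 : ∑ z, P z * Real.log (P z) = - ent p F := by
    rw [my_ent_eq, ← my_sum_prob_mul F (fun c => Real.log (prob p F c))]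
    simp [hPdef]
  have e2 : ∑ z, P z * Real.log (PY z.2) = - ent p g := by
    rw [hPdef, my_sum_prob_mul F (fun z => Real.log (PY z.2))]
    rw [my_ent_eq, ← my_sum_prob_mul g (fun b => Real.log (prob p g b))]
    simp [my_sum_prob_mul, hPYdef]
  have e3 : ∀ i, ∑ z : ((∀ i, V i) × β), P z * Real.log (Pm i (z.1 i, z.2))
      = - ent p (fun ω => (X i ω, g ω)) := by
    intro i
    rw [hPdef, my_sum_prob_mul F (fun z => Real.log (Pm i (z.1 i, z.2)))]
    rw [my_ent_eq, ← my_sum_prob_mul (fun ω => (X i ω, g ω))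
      (fun c => Real.log (prob p (fun ω => (X i ω, g ω)) c))]
    simp [my_sum_prob_mul, hPmdef, hF, joint]
  have hsplit : ∑ z, P z * ((1 - (n:ℝ)) * Real.log (PY z.2)
      + ∑ i, Real.log (Pm i (z.1 i, z.2)))
      = (1 - (n:ℝ)) * (- ent p g) + ∑ i, (- ent p (fun ω => (X i ω, g ω))) := by
    simp_rw [mul_add, Finset.sum_add_distrib, Finset.mul_sum]
    rw [Finset.sum_comm]
    congr 1
    · rw [show (∑ z : ((i : Fin n) → V i) × β, P z * ((1 - (n:ℝ)) * Real.log (PY z.2)))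
        = (1 - (n:ℝ)) * ∑ z : ((i : Fin n) → V i) × β, P z * Real.log (PY z.2) by
          rw [Finset.mul_sum]; exact Finset.sum_congr rfl fun z _ => by ring]
      rw [e2]
    · exact Finset.sum_congr rfl fun i _ => e3 i
  rw [e1, hsplit] at hgibbs
  unfold tcCond condEnt
  rw [Finset.sum_sub_distrib, Finset.sum_const, Finset.card_univ]
  simp only [nsmul_eq_mul, Fintype.card_fin]
  have hFe : ent p F = ent p (fun ω => (joint X ω, g ω)) := rfl
  have hsum : ∑ i, -ent p (fun ω => (X i ω, g ω)) = -∑ i, ent p (fun ω => (X i ω, g ω)) := by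
    rw [Finset.sum_neg_distrib]
  rw [hsum, hFe] at hgibbs
  linarith [hgibbs]

lemma my_key2 {Ω : Type} [Fintype Ω] {n m : ℕ} {V : Fin n → Type}
    [∀ i, Fintype (V i)] [∀ i, DecidableEq (V i)]
    {W : Fin m → Type} [∀ j, Fintype (W j)] [∀ j, DecidableEq (W j)]
    {p : Ω → ℝ}
    (hp0 : ∀ ω, 0 ≤ p ω) (X : ∀ i, Ω → V i) (Y : ∀ j, Ω → W j)
    (hrep : IsRepresentation p (joint X) Y) :
    ∑ j, ent p (fun ω => (joint X ω, Y j ω))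
      = ((m - 1 : ℕ) : ℝ) * ent p (joint X)
        + ent p (fun ω => (joint X ω, joint Y ω)) := by
  have main : ∀ ω, p ω * (∑ j, Real.log (prob p (fun ω' => (joint X ω', Y j ω'))
        (joint X ω, Y j ω)))
      = p ω * (((m - 1 : ℕ) : ℝ) * Real.log (prob p (joint X) (joint X ω))
        + Real.log (prob p (fun ω' => (joint X ω', joint Y ω')) (joint X ω, joint Y ω))) := by
    intro ω
    rcases eq_or_lt_of_le (hp0 ω) with h|h
    · rw [← h]; ring
    · congr 1
      have hX : 0 < prob p (joint X) (joint X ω) := lt_of_lt_of_le h (my_le_prob hp0 _ rfl)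
      have hXY : 0 < prob p (fun ω' => (joint X ω', joint Y ω')) (joint X ω, joint Y ω) :=
        lt_of_lt_of_le h (my_le_prob hp0 _ rfl)
      have hj : ∀ j, 0 < prob p (fun ω' => (joint X ω', Y j ω')) (joint X ω, Y j ω) :=
        fun j => lt_of_lt_of_le h (my_le_prob hp0 _ rfl)
      have hrep'' : prob p (joint X) (joint X ω) ^ (m - 1)
          * prob p (fun ω' => (joint X ω', joint Y ω')) (joint X ω, joint Y ω)
          = ∏ j, prob p (fun ω' => (joint X ω', Y j ω')) (joint X ω, Y j ω) :=
        hrep (joint X ω) (joint Y ω)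
      rw [← Real.log_prod (fun j _ => ne_of_gt (hj j)), ← hrep'',
        Real.log_mul (by positivity) (ne_of_gt hXY), Real.log_pow]
  have l1 : ∑ j, ent p (fun ω => (joint X ω, Y j ω))
      = -∑ ω, p ω * ∑ j, Real.log (prob p (fun ω' => (joint X ω', Y j ω'))
          (joint X ω, Y j ω)) := by
    simp_rw [my_ent_eq, Finset.mul_sum]
    rw [Finset.sum_neg_distrib, Finset.sum_comm]
  rw [l1, Finset.sum_congr rfl fun ω _ => main ω]
  rw [my_ent_eq, my_ent_eq]
  rw [show ∑ ω, p ω * (((m - 1 : ℕ) : ℝ) * Real.log (prob p (joint X) (joint X ω))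
      + Real.log (prob p (fun ω' => (joint X ω', joint Y ω')) (joint X ω, joint Y ω)))
    = ((m - 1 : ℕ) : ℝ) * ∑ ω, p ω * Real.log (prob p (joint X) (joint X ω))
      + ∑ ω, p ω * Real.log (prob p (fun ω' => (joint X ω', joint Y ω'))
        (joint X ω, joint Y ω)) by
      rw [Finset.mul_sum, ← Finset.sum_add_distrib]
      exact Finset.sum_congr rfl fun ω _ => by ring]
  ring

/-- Basic Decomposition of Information: if `Y` is a representation of `X`,
then `TC(X) ≥ TC(X;Y)` and `TC(X;Y) = TC(Y) + TC_L(X;Y)`,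
where `TC(X;Y) := TC(X) − TC(X|Y)`. -/
theorem stmt_5 {Ω : Type} [Fintype Ω] {n m : ℕ}
    {V : Fin n → Type} [∀ i, Fintype (V i)] [∀ i, DecidableEq (V i)]
    {W : Fin m → Type} [∀ j, Fintype (W j)] [∀ j, DecidableEq (W j)]
    (p : Ω → ℝ) (hp0 : ∀ ω, 0 ≤ p ω) (hp1 : ∑ ω, p ω = 1)
    (X : ∀ i, Ω → V i) (Y : ∀ j, Ω → W j)
    (hrep : IsRepresentation p (joint X) Y) :
    tc p X - tcCond p X (joint Y) ≤ tc p X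
      ∧ tc p X - tcCond p X (joint Y) = tc p Y + tcL p X Y := by
  constructor
  · linarith [my_tcCond_nonneg p hp0 hp1 X (joint Y)]
  · have c1 : ∀ i, ent p (fun ω => (joint Y ω, X i ω)) = ent p (fun ω => (X i ω, joint Y ω)) :=
      fun i => my_ent_pair_comm _ _
    have c2 : ∀ j, ent p (fun ω => (Y j ω, joint X ω)) = ent p (fun ω => (joint X ω, Y j ω)) :=
      fun j => my_ent_pair_comm _ _
    rcases Nat.eq_zero_or_pos m with hm|hm
    · subst hm
      have hXY1 : ∀ c : ((∀ i, V i) × (∀ j : Fin 0, W j)),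
          prob p (fun ω => (joint X ω, joint Y ω)) c = 1 := by
        intro c
        have := hrep c.1 c.2
        simpa using this
      have hJX1 : ∀ a, prob p (joint X) a = 1 := by
        intro a
        have heq : prob p (joint X) a
            = prob p (fun ω => (joint X ω, joint Y ω)) (a, fun j => j.elim0) := by
          unfold prob
          refine Finset.sum_congr rfl fun ω _ => ?_
          have hiff : (joint X ω = a)
              ↔ ((joint X ω, joint Y ω) = (a, fun j => j.elim0)) := by
            constructor
            · intro h; exact Prod.ext h (funext fun j => j.elim0)
            · intro h; exact (Prod.ext_iff.mp h).1
          simp only [hiff]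
        rw [heq, hXY1]
      have hJY1 : ∀ y, prob p (joint Y) y = 1 := by
        intro y
        unfold prob
        have hy : ∀ ω, joint Y ω = y := fun ω => funext fun j => j.elim0
        simp [hy, hp1]
      have hentJX : ent p (joint X) = 0 := by simp [ent, hJX1]
      have hentJY : ent p (joint Y) = 0 := by simp [ent, hJY1]
      have hentXY : ent p (fun ω => (joint X ω, joint Y ω)) = 0 := by simp [ent, hXY1]
      unfold tc tcCond tcL mi condEnt
      simp only [c1, hentJX, hentJY, hentXY, Finset.univ_eq_empty, Finset.sum_empty,
        Finset.sum_add_distrib, Finset.sum_sub_distrib]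
      ring
    · have hkey := my_key2 hp0 X Y hrep
      rw [Nat.cast_sub hm, Nat.cast_one] at hkey
      unfold tc tcCond tcL mi condEnt
      simp only [c1, c2]
      simp only [Finset.sum_add_distrib, Finset.sum_sub_distrib, Finset.sum_const,
        Finset.card_univ, Fintype.card_fin, nsmul_eq_mul]
      linear_combination -hkey
end

section
/- If Y = (Y_1,...,Y_m) is a representation of X = (X_1,...,X_n), then TC(X;Y) ≥ TC_L(X;Y), i.e., TC(X) − TC(X|Y) ≥ Σ_{i=1}^n I(Y:X_i) − Σ_{j=1}^m I(Y_j:X). -/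
open Finset

section auxlemmas
variable {Ω : Type} [Fintype Ω] {α : Type} [Fintype α] [DecidableEq α]

lemma sum_push (p : Ω → ℝ) (f : Ω → α) (h : α → ℝ) :
    ∑ a : α, prob p f a * h a = ∑ ω, p ω * h (f ω) := by
  unfold prob
  simp_rw [Finset.sum_mul, ite_mul, zero_mul]
  rw [Finset.sum_comm]
  simp [Finset.sum_ite_eq]

lemma ent_eq (p : Ω → ℝ) (f : Ω → α) :
    ent p f = -∑ ω, p ω * Real.log (prob p f (f ω)) := by
  rw [ent, sum_push p f (fun a => Real.log (prob p f a))]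

lemma sum_prob (p : Ω → ℝ) (hp1 : ∑ ω, p ω = 1) (f : Ω → α) :
    ∑ a : α, prob p f a = 1 := by
  have := sum_push p f (fun _ => 1)
  simpa [hp1] using this

omit [Fintype α] in
lemma prob_pos (p : Ω → ℝ) (hp0 : ∀ ω, 0 ≤ p ω) (f : Ω → α) {ω : Ω} (hω : 0 < p ω) :
    0 < prob p f (f ω) := by
  have h1 : p ω ≤ prob p f (f ω) := by
    have := Finset.single_le_sum
      (f := fun ω' => if f ω' = f ω then p ω' else 0)
      (fun i _ => by by_cases h : f i = f ω <;> simp [h, hp0 i]) (Finset.mem_univ ω)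
    simpa [prob] using this
  linarith

omit [Fintype α] in
lemma prob_nonneg (p : Ω → ℝ) (hp0 : ∀ ω, 0 ≤ p ω) (f : Ω → α) (a : α) :
    0 ≤ prob p f a :=
  Finset.sum_nonneg fun ω _ => by by_cases h : f ω = a <;> simp [h, hp0 ω]

lemma ent_pair_comm {β : Type} [Fintype β] [DecidableEq β]
    (p : Ω → ℝ) (f : Ω → α) (g : Ω → β) :
    ent p (fun ω => (f ω, g ω)) = ent p (fun ω => (g ω, f ω)) := by
  simp only [ent_eq]
  congr 1
  refine Finset.sum_congr rfl fun ω _ => ?_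
  congr 1
  congr 1
  unfold prob
  refine Finset.sum_congr rfl fun ω' _ => ?_
  simp [Prod.ext_iff, and_comm]

lemma gibbs {S : Type} [Fintype S] (q r : S → ℝ) (hq : ∀ s, 0 ≤ q s)
    (hr : ∀ s, 0 ≤ r s) (hqr : ∀ s, 0 < q s → 0 < r s)
    (hsum : ∑ s, r s ≤ ∑ s, q s) :
    ∑ s, q s * Real.log (r s) ≤ ∑ s, q s * Real.log (q s) := by
  have key : ∀ s, q s * Real.log (r s) - q s * Real.log (q s) ≤ r s - q s := by
    intro s
    rcases eq_or_lt_of_le (hq s) with h | h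
    · simp [← h, hr s]
    · have hrs := hqr s h
      have hlog : Real.log (r s) - Real.log (q s) ≤ r s / q s - 1 := by
        rw [← Real.log_div (ne_of_gt hrs) (ne_of_gt h)]
        exact Real.log_le_sub_one_of_pos (by positivity)
      have := mul_le_mul_of_nonneg_left hlog (le_of_lt h)
      have h2 : q s * (r s / q s - 1) = r s - q s := by
        field_simp
      nlinarith
  have hs := Finset.sum_le_sum (fun s (_ : s ∈ Finset.univ) => key s)
  rw [Finset.sum_sub_distrib, Finset.sum_sub_distrib] at hs
  linarith

end auxlemmas

lemma ent_subadd {Ω : Type} [Fintype Ω] {m : ℕ} {W : Fin m → Type}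
    [∀ j, Fintype (W j)] [∀ j, DecidableEq (W j)]
    (p : Ω → ℝ) (hp0 : ∀ ω, 0 ≤ p ω) (hp1 : ∑ ω, p ω = 1) (Y : ∀ j, Ω → W j) :
    ent p (joint Y) ≤ ∑ j, ent p (Y j) := by
  classical
  set r : (∀ j, W j) → ℝ := fun y => ∏ j, prob p (Y j) (y j) with hrdef
  have h1 : ∑ j, ent p (Y j) = -∑ ω, p ω * Real.log (r (joint Y ω)) := by
    simp only [ent_eq, ← Finset.sum_neg_distrib]
    rw [Finset.sum_comm]
    refine Finset.sum_congr rfl fun ω _ => ?_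
    rcases eq_or_lt_of_le (hp0 ω) with h | h
    · simp [← h]
    · have hl : Real.log (r (joint Y ω)) = ∑ j, Real.log (prob p (Y j) (Y j ω)) := by
        rw [hrdef]
        exact Real.log_prod (fun j _ => ne_of_gt (prob_pos p hp0 (Y j) h))
      rw [hl, Finset.mul_sum]
      simp
  have h2 : ∑ j, ent p (Y j) = -∑ y, prob p (joint Y) y * Real.log (r y) := by
    rw [h1, ← sum_push p (joint Y) (fun y => Real.log (r y))]
  rw [h2, ent]
  have hsum : ∑ y, r y = 1 := by
    rw [hrdef]
    rw [← Fintype.piFinset_univ, ← Finset.prod_univ_sum]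
    simp [sum_prob p hp1]
  have hqr : ∀ y, 0 < prob p (joint Y) y → 0 < r y := by
    intro y hy
    have hex : ∃ ω, 0 < if joint Y ω = y then p ω else 0 := by
      by_contra hcon
      push_neg at hcon
      have : prob p (joint Y) y ≤ 0 := Finset.sum_nonpos fun ω _ => hcon ω
      linarith
    obtain ⟨ω, hω⟩ := hex
    have hy1 : joint Y ω = y := by
      by_contra h; simp [h] at hω
    have hy2 : 0 < p ω := by simpa [hy1] using hω
    subst hy1
    exact Finset.prod_pos fun j _ => prob_pos p hp0 (Y j) hy2
  have := gibbs (prob p (joint Y)) r (prob_nonneg p hp0 _)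
    (fun y => Finset.prod_nonneg fun j _ => prob_nonneg p hp0 _ _) hqr
    (by rw [hsum, sum_prob p hp1])
  linarith

lemma repr_ent {Ω : Type} [Fintype Ω] {α : Type} [Fintype α] [DecidableEq α]
    {m : ℕ} {W : Fin m → Type} [∀ j, Fintype (W j)] [∀ j, DecidableEq (W j)]
    (p : Ω → ℝ) (hp0 : ∀ ω, 0 ≤ p ω) (f : Ω → α) (Y : ∀ j, Ω → W j)
    (hrep : IsRepresentation p f Y) :
    ∑ j, ent p (fun ω => (f ω, Y j ω)) + ent p f
      = (m : ℝ) * ent p f + ent p (fun ω => (f ω, joint Y ω)) := by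
  classical
  have key : ∀ ω : Ω, 0 < p ω →
      (∑ j, Real.log (prob p (fun ω' => (f ω', Y j ω')) (f ω, Y j ω)))
        + Real.log (prob p f (f ω))
      = (m : ℝ) * Real.log (prob p f (f ω))
        + Real.log (prob p (fun ω' => (f ω', joint Y ω')) (f ω, joint Y ω)) := by
    intro ω hω
    have hA := prob_pos p hp0 f hω
    have hB := prob_pos p hp0 (fun ω' => (f ω', joint Y ω')) hω
    have hC : ∀ j, 0 < prob p (fun ω' => (f ω', Y j ω')) (f ω, Y j ω) :=
      fun j => prob_pos p hp0 (fun ω' => (f ω', Y j ω')) hω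
    have hr := hrep (f ω) (joint Y ω)
    simp only [show ∀ j, joint Y ω j = Y j ω from fun _ => rfl] at hr
    have hlog := congrArg Real.log hr
    rw [Real.log_mul (pow_ne_zero _ (ne_of_gt hA)) (ne_of_gt hB), Real.log_pow,
        Real.log_prod (fun j _ => ne_of_gt (hC j))] at hlog
    cases m with
    | zero =>
      simp only [Finset.univ_eq_empty, Finset.sum_empty, Nat.cast_zero, zero_mul,
        zero_add, CharP.cast_eq_zero] at hlog ⊢
      have hBA : prob p (fun ω' => (f ω', joint Y ω')) (f ω, joint Y ω)
          = prob p f (f ω) := by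
        unfold prob
        refine Finset.sum_congr rfl fun ω' _ => ?_
        have hjy : joint Y ω' = joint Y ω := Subsingleton.elim _ _
        simp [Prod.ext_iff, hjy]
      rw [hBA]
    | succ k =>
      have hm : (k + 1) - 1 = k := rfl
      rw [hm] at hlog
      push_cast
      push_cast at hlog
      linarith [hlog]
  have big : ∑ ω, p ω * ((∑ j, Real.log (prob p (fun ω' => (f ω', Y j ω')) (f ω, Y j ω)))
        + Real.log (prob p f (f ω)))
      = ∑ ω, p ω * ((m : ℝ) * Real.log (prob p f (f ω))
        + Real.log (prob p (fun ω' => (f ω', joint Y ω')) (f ω, joint Y ω))) := by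
    refine Finset.sum_congr rfl fun ω _ => ?_
    rcases eq_or_lt_of_le (hp0 ω) with h | h
    · rw [← h]; ring
    · rw [key ω h]
  simp only [mul_add, Finset.sum_add_distrib, Finset.mul_sum] at big
  rw [Finset.sum_comm] at big
  have hmm : ∀ ω : Ω, p ω * ((m : ℝ) * Real.log (prob p f (f ω)))
      = (m : ℝ) * (p ω * Real.log (prob p f (f ω))) := fun ω => by ring
  simp only [hmm] at big
  rw [← Finset.mul_sum] at big
  simp only [ent_eq]
  rw [Finset.sum_neg_distrib]
  linear_combination (-1 : ℝ) * big

/-- if `Y` is a representation of `X`, then `TC(X;Y) ≥ TC_L(X;Y)`, i.e.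
`TC(X) − TC(X|Y) ≥ ∑ᵢ I(Y:Xᵢ) − ∑ⱼ I(Yⱼ:X)`. -/
theorem stmt_6 {Ω : Type} [Fintype Ω] {n m : ℕ}
    {V : Fin n → Type} [∀ i, Fintype (V i)] [∀ i, DecidableEq (V i)]
    {W : Fin m → Type} [∀ j, Fintype (W j)] [∀ j, DecidableEq (W j)]
    (p : Ω → ℝ) (hp0 : ∀ ω, 0 ≤ p ω) (hp1 : ∑ ω, p ω = 1)
    (X : ∀ i, Ω → V i) (Y : ∀ j, Ω → W j)
    (hrep : IsRepresentation p (joint X) Y) :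
    tcL p X Y ≤ tc p X - tcCond p X (joint Y) := by
  classical
  have F1 := repr_ent p hp0 (joint X) Y hrep
  have F2 := ent_subadd p hp0 hp1 Y
  have swap1 : ∀ i, ent p (fun ω => (joint Y ω, X i ω))
      = ent p (fun ω => (X i ω, joint Y ω)) := fun i => ent_pair_comm p _ _
  have swap2 : ∀ j, ent p (fun ω => (Y j ω, joint X ω))
      = ent p (fun ω => (joint X ω, Y j ω)) := fun j => ent_pair_comm p _ _
  simp only [tcL, tc, tcCond, mi, condEnt, swap1, swap2]
  simp only [Finset.sum_add_distrib, Finset.sum_sub_distrib, Finset.sum_const,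
    Finset.card_univ, Fintype.card_fin, nsmul_eq_mul]
  linarith [F1, F2]
end

section
/- (Hierarchical Lower Bound on TC(X)) If Y^{1:r} = (Y^1,...,Y^r) is a hierarchical representation of X = (X_1,...,X_n) and Y^0 := X, then TC(X) ≥ Σ_{k=1}^r TC_L(Y^{k-1}; Y^k). -/
open Finset

namespace Stmt8Aux

open Finset

variable {Ω : Type} [Fintype Ω] {α β γ : Type}

lemma prob_nonneg [DecidableEq α] {p : Ω → ℝ} (hp0 : ∀ ω, 0 ≤ p ω) (f : Ω → α) (a : α) :
    0 ≤ prob p f a := by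
  apply Finset.sum_nonneg
  intro ω _
  split <;> simp [hp0 ω]

lemma sum_prob [Fintype α] [DecidableEq α] {p : Ω → ℝ} (hp1 : ∑ ω, p ω = 1) (f : Ω → α) :
    ∑ a, prob p f a = 1 := by
  unfold prob
  rw [Finset.sum_comm]
  simp [hp1]

lemma le_prob_self [DecidableEq α] {p : Ω → ℝ} (hp0 : ∀ ω, 0 ≤ p ω) (f : Ω → α) (ω : Ω) :
    p ω ≤ prob p f (f ω) := by
  unfold prob
  have := Finset.single_le_sum (f := fun ω' => if f ω' = f ω then p ω' else 0)
    (fun i _ => by split <;> simp [hp0 i]) (Finset.mem_univ ω)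
  simpa using this

lemma prob_self_pos [DecidableEq α] {p : Ω → ℝ} (hp0 : ∀ ω, 0 ≤ p ω) (f : Ω → α) {ω : Ω}
    (hω : 0 < p ω) : 0 < prob p f (f ω) :=
  lt_of_lt_of_le hω (le_prob_self hp0 f ω)

lemma sum_prob_mul [Fintype α] [DecidableEq α] (p : Ω → ℝ) (f : Ω → α) (F : α → ℝ) :
    ∑ a, prob p f a * F a = ∑ ω, p ω * F (f ω) := by
  unfold prob
  simp only [Finset.sum_mul, ite_mul, zero_mul]
  rw [Finset.sum_comm]
  simp

lemma ent_eq [Fintype α] [DecidableEq α] (p : Ω → ℝ) (f : Ω → α) :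
    ent p f = -∑ ω, p ω * Real.log (prob p f (f ω)) := by
  rw [ent, ← sum_prob_mul p f (fun a => Real.log (prob p f a))]

lemma prob_comp_eq [DecidableEq α] [DecidableEq β] (p : Ω → ℝ) {e : α → β}
    (he : Function.Injective e) (f : Ω → α) (a : α) :
    prob p (fun ω => e (f ω)) (e a) = prob p f a :=
  Finset.sum_congr rfl fun ω _ => by simp [he.eq_iff]

lemma ent_comp [Fintype α] [DecidableEq α] [Fintype β] [DecidableEq β]
    (p : Ω → ℝ) {e : α → β} (he : Function.Injective e) (f : Ω → α) :
    ent p (fun ω => e (f ω)) = ent p f := by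
  rw [ent_eq, ent_eq]
  congr 1
  refine Finset.sum_congr rfl fun ω _ => ?_
  rw [prob_comp_eq p he f (f ω)]

lemma ent_pair_comm [Fintype α] [DecidableEq α] [Fintype β] [DecidableEq β]
    (p : Ω → ℝ) (f : Ω → α) (g : Ω → β) :
    ent p (fun ω => (f ω, g ω)) = ent p (fun ω => (g ω, f ω)) := by
  have h : (fun ω => (f ω, g ω)) = fun ω => Prod.swap (g ω, f ω) := rfl
  rw [h, ent_comp p Prod.swap_injective]

lemma prob_const [DecidableEq α] {p : Ω → ℝ} (hp1 : ∑ ω, p ω = 1) (b a : α) :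
    prob p (fun _ => b) a = if b = a then 1 else 0 := by
  unfold prob
  split <;> simp_all

lemma ent_const [Fintype α] [DecidableEq α] {p : Ω → ℝ} (hp1 : ∑ ω, p ω = 1) (b : α) :
    ent p (fun _ => b) = 0 := by
  unfold ent
  rw [Finset.sum_eq_single b]
  · simp [prob_const hp1]
  · intro c _ hc
    have hbc : ¬ (b = c) := fun h => hc h.symm
    simp [prob_const hp1, hbc]
  · simp

lemma ent_pair_const_left [Fintype α] [DecidableEq α] [Fintype β] [DecidableEq β]
    (p : Ω → ℝ) (b : β) (f : Ω → α) :
    ent p (fun ω => (b, f ω)) = ent p f := by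
  have he : Function.Injective (fun a : α => (b, a)) := fun x y h => by
    simpa using h
  exact ent_comp p he f

lemma ent_pair_const_right [Fintype α] [DecidableEq α] [Fintype β] [DecidableEq β]
    (p : Ω → ℝ) (b : β) (f : Ω → α) :
    ent p (fun ω => (f ω, b)) = ent p f := by
  have he : Function.Injective (fun a : α => (a, b)) := fun x y h => by
    simpa using h
  exact ent_comp p he f

lemma gibbs {ι : Type} [Fintype ι] (A B : ι → ℝ)
    (hA : ∀ i, 0 ≤ A i) (hB : ∀ i, 0 ≤ B i) (habs : ∀ i, B i = 0 → A i = 0)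
    (hsum : ∑ i, B i ≤ ∑ i, A i) :
    ∑ i, A i * Real.log (B i) ≤ ∑ i, A i * Real.log (A i) := by
  have key : ∀ i, A i * Real.log (B i) - A i * Real.log (A i) ≤ B i - A i := by
    intro i
    rcases eq_or_lt_of_le (hA i) with h | h
    · rw [← h]
      simp [hB i]
    · have hBpos : 0 < B i := by
        rcases eq_or_lt_of_le (hB i) with h' | h'
        · exact absurd (habs i h'.symm) (by intro h''; rw [h''] at h; exact lt_irrefl 0 h)
        · exact h'
      have hlog := Real.log_le_sub_one_of_pos (div_pos hBpos h)
      rw [Real.log_div (ne_of_gt hBpos) (ne_of_gt h)] at hlog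
      have hmul := mul_le_mul_of_nonneg_left hlog (le_of_lt h)
      calc A i * Real.log (B i) - A i * Real.log (A i)
          = A i * (Real.log (B i) - Real.log (A i)) := by ring
        _ ≤ A i * (B i / A i - 1) := hmul
        _ = B i - A i := by field_simp
  have hsum2 := Finset.sum_le_sum (fun i (_ : i ∈ Finset.univ) => key i)
  rw [Finset.sum_sub_distrib, Finset.sum_sub_distrib] at hsum2
  linarith

lemma gibbs_omega [Fintype α] [DecidableEq α] {p : Ω → ℝ} (hp0 : ∀ ω, 0 ≤ p ω)
    (hp1 : ∑ ω, p ω = 1) (f : Ω → α) (Bx : α → ℝ) (hBx : ∀ a, 0 ≤ Bx a)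
    (hsum : ∑ a, Bx a ≤ 1) (hpos : ∀ ω, 0 < p ω → 0 < Bx (f ω)) :
    ∑ ω, p ω * Real.log (Bx (f ω)) ≤ ∑ ω, p ω * Real.log (prob p f (f ω)) := by
  rw [← sum_prob_mul p f (fun a => Real.log (Bx a)),
      ← sum_prob_mul p f (fun a => Real.log (prob p f a))]
  apply gibbs _ _ (prob_nonneg hp0 f) hBx
  · intro a ha
    apply Finset.sum_eq_zero
    intro ω _
    split
    next h =>
      by_contra hne
      have hpω : 0 < p ω := lt_of_le_of_ne (hp0 ω) (Ne.symm hne)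
      have := hpos ω hpω
      rw [h, ha] at this
      exact lt_irrefl 0 this
    next => rfl
  · rw [sum_prob hp1 f]
    exact hsum

lemma prob_fst_marg [Fintype α] [DecidableEq α] [DecidableEq γ]
    (p : Ω → ℝ) (f : Ω → α) (h : Ω → γ) (c : γ) :
    ∑ a, prob p (fun ω => (f ω, h ω)) (a, c) = prob p h c := by
  unfold prob
  rw [Finset.sum_comm]
  refine Finset.sum_congr rfl fun ω _ => ?_
  have key : ∀ a, (if (f ω, h ω) = (a, c) then p ω else 0)
      = if f ω = a then (if h ω = c then p ω else 0) else 0 := by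
    intro a
    by_cases h1 : f ω = a <;> by_cases h2 : h ω = c <;> simp [Prod.ext_iff, h1, h2]
  simp only [key, Finset.sum_ite_eq, Finset.mem_univ, if_true]

/-- Conditional subadditivity : H((f,g),h) + H(h) ≤ H(f,h) + H(g,h). -/
lemma ent_subadd_cond [Fintype α] [DecidableEq α] [Fintype β] [DecidableEq β]
    [Fintype γ] [DecidableEq γ] {p : Ω → ℝ} (hp0 : ∀ ω, 0 ≤ p ω) (hp1 : ∑ ω, p ω = 1)
    (f : Ω → α) (g : Ω → β) (h : Ω → γ) :
    ent p (fun ω => ((f ω, g ω), h ω)) + ent p h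
      ≤ ent p (fun ω => (f ω, h ω)) + ent p (fun ω => (g ω, h ω)) := by
  classical
  set Pfh := prob p (fun ω => (f ω, h ω)) with hPfh
  set Pgh := prob p (fun ω => (g ω, h ω)) with hPgh
  set Ph := prob p h with hPh
  have hPfh0 : ∀ x, 0 ≤ Pfh x := prob_nonneg hp0 _
  have hPgh0 : ∀ x, 0 ≤ Pgh x := prob_nonneg hp0 _
  have hPh0 : ∀ x, 0 ≤ Ph x := prob_nonneg hp0 _
  set Bx : (α × β) × γ → ℝ := fun x => Pfh (x.1.1, x.2) * Pgh (x.1.2, x.2) / Ph x.2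
    with hBxdef
  have hBx : ∀ x, 0 ≤ Bx x := fun x =>
    div_nonneg (mul_nonneg (hPfh0 _) (hPgh0 _)) (hPh0 _)
  have hmargf : ∀ c, ∑ a, Pfh (a, c) = Ph c := fun c => prob_fst_marg p f h c
  have hmargg : ∀ c, ∑ b, Pgh (b, c) = Ph c := fun c => prob_fst_marg p g h c
  have hsum : ∑ x, Bx x ≤ 1 := by
    rw [Fintype.sum_prod_type, Finset.sum_comm]
    have hc : ∀ c, ∑ ab : α × β, Bx (ab, c) ≤ Ph c := by
      intro c
      have : ∑ ab : α × β, Bx (ab, c)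
          = (∑ a, Pfh (a, c)) * (∑ b, Pgh (b, c)) / Ph c := by
        rw [Fintype.sum_prod_type]
        rw [Finset.sum_mul, Finset.sum_div]
        refine Finset.sum_congr rfl fun a _ => ?_
        rw [Finset.mul_sum, Finset.sum_div]
      rw [this, hmargf, hmargg]
      by_cases hc0 : Ph c = 0
      · rw [hc0]
        simp
      · rw [mul_div_assoc, div_self hc0, mul_one]
    calc ∑ c, ∑ ab : α × β, Bx (ab, c) ≤ ∑ c, Ph c :=
          Finset.sum_le_sum fun c _ => hc c
      _ = 1 := sum_prob hp1 h
  have hpos : ∀ ω, 0 < p ω → 0 < Bx ((f ω, g ω), h ω) := by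
    intro ω hω
    exact div_pos (mul_pos (prob_self_pos hp0 (fun ω' => (f ω', h ω')) hω)
      (prob_self_pos hp0 (fun ω' => (g ω', h ω')) hω)) (prob_self_pos hp0 h hω)
  have key := gibbs_omega hp0 hp1 (fun ω => ((f ω, g ω), h ω)) Bx hBx hsum hpos
  have step : ∑ ω, p ω * Real.log (Bx ((f ω, g ω), h ω))
      = ∑ ω, (p ω * Real.log (Pfh (f ω, h ω)) + p ω * Real.log (Pgh (g ω, h ω))
              - p ω * Real.log (Ph (h ω))) := by
    refine Finset.sum_congr rfl fun ω _ => ?_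
    rcases eq_or_lt_of_le (hp0 ω) with hω | hω
    · rw [← hω]
      ring
    · have h1 : Pfh (f ω, h ω) ≠ 0 :=
        ne_of_gt (prob_self_pos hp0 (fun ω' => (f ω', h ω')) hω)
      have h2 : Pgh (g ω, h ω) ≠ 0 :=
        ne_of_gt (prob_self_pos hp0 (fun ω' => (g ω', h ω')) hω)
      have h3 : Ph (h ω) ≠ 0 := ne_of_gt (prob_self_pos hp0 h hω)
      show p ω * Real.log (Pfh (f ω, h ω) * Pgh (g ω, h ω) / Ph (h ω)) = _
      rw [Real.log_div (mul_ne_zero h1 h2) h3, Real.log_mul h1 h2]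
      ring
  rw [step] at key
  rw [ent_eq p (fun ω => ((f ω, g ω), h ω)), ent_eq p h,
      ent_eq p (fun ω => (f ω, h ω)), ent_eq p (fun ω => (g ω, h ω))]
  simp only [Finset.sum_sub_distrib, Finset.sum_add_distrib] at key
  rw [← hPfh, ← hPgh, ← hPh]
  linarith

lemma condEnt_pair_le [Fintype α] [DecidableEq α] [Fintype β] [DecidableEq β]
    [Fintype γ] [DecidableEq γ] {p : Ω → ℝ} (hp0 : ∀ ω, 0 ≤ p ω) (hp1 : ∑ ω, p ω = 1)
    (f : Ω → α) (g : Ω → β) (h : Ω → γ) :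
    condEnt p (fun ω => (f ω, g ω)) h ≤ condEnt p f h + condEnt p g h := by
  unfold condEnt
  have := ent_subadd_cond hp0 hp1 f g h
  linarith

lemma condEnt_comp [Fintype α] [DecidableEq α] [Fintype β] [DecidableEq β]
    [Fintype γ] [DecidableEq γ] (p : Ω → ℝ) {e : α → β} (he : Function.Injective e)
    (f : Ω → α) (g : Ω → γ) :
    condEnt p (fun ω => e (f ω)) g = condEnt p f g := by
  unfold condEnt
  have he2 : Function.Injective (fun x : α × γ => (e x.1, x.2)) := by
    intro x y hxy
    simp only [Prod.ext_iff] at hxy ⊢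
    exact ⟨he hxy.1, hxy.2⟩
  have : ent p (fun ω => (e (f ω), g ω)) = ent p (fun ω => (f ω, g ω)) :=
    ent_comp p he2 (fun ω => (f ω, g ω))
  rw [this]

end Stmt8Aux

namespace Stmt8Aux

open Finset

variable {Ω : Type} [Fintype Ω] {α β : Type}

/-- Key entropy identity for a representation:
`H(f, Y) = ∑ⱼ H(f, Yⱼ) − (m−1)·H(f)`. -/
lemma rep_ent [Fintype α] [DecidableEq α] {m : ℕ} {W : Fin m → Type}
    [∀ j, Fintype (W j)] [∀ j, DecidableEq (W j)] {p : Ω → ℝ}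
    (hp0 : ∀ ω, 0 ≤ p ω)
    (f : Ω → α) (Y : ∀ j, Ω → W j) (hrep : IsRepresentation p f Y) :
    ent p (fun ω => (f ω, joint Y ω))
      = (∑ j, ent p (fun ω => (f ω, Y j ω))) - ((m - 1 : ℕ) : ℝ) * ent p f := by
  classical
  have key : ∀ ω, ((m - 1 : ℕ) : ℝ) * (p ω * Real.log (prob p f (f ω)))
      + p ω * Real.log (prob p (fun ω' => (f ω', joint Y ω')) (f ω, joint Y ω))
      = ∑ j, p ω * Real.log (prob p (fun ω' => (f ω', Y j ω')) (f ω, Y j ω)) := by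
    intro ω
    rcases eq_or_lt_of_le (hp0 ω) with hω | hω
    · rw [← hω]
      simp
    · have hPf : prob p f (f ω) ≠ 0 := ne_of_gt (prob_self_pos hp0 f hω)
      have hPfy : prob p (fun ω' => (f ω', joint Y ω')) (f ω, joint Y ω) ≠ 0 :=
        ne_of_gt (prob_self_pos hp0 (fun ω' => (f ω', joint Y ω')) hω)
      have hr := hrep (f ω) (joint Y ω)
      have hprod : (∏ j, prob p (fun ω' => (f ω', Y j ω')) (f ω, joint Y ω j)) ≠ 0 := by
        rw [← hr]
        exact mul_ne_zero (pow_ne_zero _ hPf) hPfy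
      have hfac : ∀ j ∈ (Finset.univ : Finset (Fin m)),
          prob p (fun ω' => (f ω', Y j ω')) (f ω, joint Y ω j) ≠ 0 :=
        Finset.prod_ne_zero_iff.mp hprod
      have hlog := congrArg Real.log hr
      rw [Real.log_mul (pow_ne_zero _ hPf) hPfy, Real.log_pow,
          Real.log_prod hfac] at hlog
      have hj : ∀ j, joint Y ω j = Y j ω := fun j => rfl
      calc ((m - 1 : ℕ) : ℝ) * (p ω * Real.log (prob p f (f ω)))
          + p ω * Real.log (prob p (fun ω' => (f ω', joint Y ω')) (f ω, joint Y ω))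
          = p ω * (((m - 1 : ℕ) : ℝ) * Real.log (prob p f (f ω))
            + Real.log (prob p (fun ω' => (f ω', joint Y ω')) (f ω, joint Y ω))) := by
            ring
        _ = p ω * (∑ j, Real.log (prob p (fun ω' => (f ω', Y j ω')) (f ω, Y j ω))) := by
            simp only [hj] at hlog
            rw [← hlog]
        _ = ∑ j, p ω * Real.log (prob p (fun ω' => (f ω', Y j ω')) (f ω, Y j ω)) := by
            rw [Finset.mul_sum]
  have hsum := Finset.sum_congr rfl (fun ω (_ : ω ∈ Finset.univ) => key ω)
  rw [Finset.sum_add_distrib, ← Finset.mul_sum, Finset.sum_comm] at hsum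
  rw [ent_eq p (fun ω => (f ω, joint Y ω)), ent_eq p f]
  have hev : ∀ j, ent p (fun ω => (f ω, Y j ω))
      = -∑ ω, p ω * Real.log (prob p (fun ω' => (f ω', Y j ω')) (f ω, Y j ω)) :=
    fun j => ent_eq p _
  simp only [hev]
  rw [Finset.sum_neg_distrib]
  linarith [hsum]

lemma ent_joint_zero {V : Fin 0 → Type} [∀ i, Fintype (V i)] [∀ i, DecidableEq (V i)]
    {p : Ω → ℝ} (hp1 : ∑ ω, p ω = 1) (X : ∀ i, Ω → V i) :
    ent p (joint X) = 0 := by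
  have h : joint X = fun _ => (default : ∀ i : Fin 0, V i) :=
    funext fun ω => Subsingleton.elim _ _
  rw [h, ent_const hp1]

lemma condEnt_joint_zero {V : Fin 0 → Type} [∀ i, Fintype (V i)] [∀ i, DecidableEq (V i)]
    [Fintype β] [DecidableEq β] {p : Ω → ℝ} (hp1 : ∑ ω, p ω = 1)
    (X : ∀ i, Ω → V i) (g : Ω → β) :
    condEnt p (joint X) g = 0 := by
  have h : joint X = fun _ => (default : ∀ i : Fin 0, V i) :=
    funext fun ω => Subsingleton.elim _ _
  rw [condEnt, h]
  have he : Function.Injective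
      (fun b : β => ((default : ∀ i : Fin 0, V i), b)) := fun x y hxy => by
    simpa using hxy
  have : ent p (fun ω => ((default : ∀ i : Fin 0, V i), g ω)) = ent p g :=
    ent_comp p he g
  rw [this]
  ring

lemma tcCond_nonneg [Fintype β] [DecidableEq β] {p : Ω → ℝ}
    (hp0 : ∀ ω, 0 ≤ p ω) (hp1 : ∑ ω, p ω = 1) (g : Ω → β) :
    ∀ {n : ℕ} {V : Fin n → Type} [∀ i, Fintype (V i)] [∀ i, DecidableEq (V i)]
      (X : ∀ i, Ω → V i), 0 ≤ tcCond p X g := by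
  intro n
  induction n with
  | zero =>
    intro V _ _ X
    rw [tcCond, condEnt_joint_zero hp1 X g]
    simp
  | succ n ih =>
    intro V _ _ X
    set X' : ∀ i : Fin n, Ω → V i.succ := fun i => X i.succ with hX'
    have e_inj : Function.Injective
        (fun x : V 0 × (∀ i : Fin n, V i.succ) => Fin.cons x.1 x.2) := by
      intro x y hxy
      have h0 := congrFun hxy 0
      have ht := congrArg Fin.tail hxy
      simp only [Fin.cons_zero] at h0
      simp only [Fin.tail_cons] at ht
      exact Prod.ext h0 ht
    have hj : joint X = fun ω =>
        (fun x : V 0 × (∀ i : Fin n, V i.succ) => Fin.cons x.1 x.2)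
          (X 0 ω, joint X' ω) := by
      funext ω
      exact (Fin.cons_self_tail (joint X ω)).symm
    have h1 : condEnt p (joint X) g
        = condEnt p (fun ω => (X 0 ω, joint X' ω)) g := by
      rw [hj, condEnt_comp p e_inj]
    have h2 := condEnt_pair_le hp0 hp1 (X 0) (joint X') g
    have h3 : ∑ i : Fin (n + 1), condEnt p (X i) g
        = condEnt p (X 0) g + ∑ i : Fin n, condEnt p (X' i) g := by
      rw [Fin.sum_univ_succ]
    have h4 := ih X'
    rw [tcCond] at h4 ⊢
    rw [h1, h3]
    linarith

lemma condEnt_unit {p : Ω → ℝ} [Fintype α] [DecidableEq α] (hp1 : ∑ ω, p ω = 1)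
    (f : Ω → α) :
    condEnt p f (fun _ => ()) = ent p f := by
  rw [condEnt]
  have h : ent p (fun ω => (f ω, ())) = ent p f := ent_pair_const_right p () f
  rw [h, ent_const hp1]
  ring

lemma tc_nonneg {n : ℕ} {V : Fin n → Type} [∀ i, Fintype (V i)] [∀ i, DecidableEq (V i)]
    {p : Ω → ℝ} (hp0 : ∀ ω, 0 ≤ p ω) (hp1 : ∑ ω, p ω = 1) (X : ∀ i, Ω → V i) :
    0 ≤ tc p X := by
  have h := tcCond_nonneg hp0 hp1 (fun _ => ()) X
  rw [tcCond] at h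
  rw [tc]
  rw [condEnt_unit hp1 (joint X)] at h
  have hs : ∑ i, condEnt p (X i) (fun _ => ()) = ∑ i, ent p (X i) :=
    Finset.sum_congr rfl fun i _ => condEnt_unit hp1 (X i)
  rw [hs] at h
  exact h

end Stmt8Aux

namespace Stmt8Aux

open Finset

variable {Ω : Type} [Fintype Ω]

lemma layer {n mm : ℕ} {V : Fin n → Type} [∀ i, Fintype (V i)] [∀ i, DecidableEq (V i)]
    {W : Fin mm → Type} [∀ j, Fintype (W j)] [∀ j, DecidableEq (W j)]
    {p : Ω → ℝ} (hp0 : ∀ ω, 0 ≤ p ω) (hp1 : ∑ ω, p ω = 1)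
    (X : ∀ i, Ω → V i) (Y : ∀ j, Ω → W j)
    (hrep : IsRepresentation p (joint X) Y) :
    tcL p X Y + tc p Y ≤ tc p X := by
  classical
  rcases Nat.eq_zero_or_pos mm with hm | hm
  · subst hm
    have hjY : joint Y = fun _ => (default : ∀ j : Fin 0, W j) :=
      funext fun ω => Subsingleton.elim _ _
    have hmi : ∀ i, mi p (joint Y) (X i) = 0 := by
      intro i
      rw [mi]
      have h1 : ent p (joint Y) = 0 := by rw [hjY]; exact ent_const hp1 _
      have h2 : ent p (fun ω => (joint Y ω, X i ω)) = ent p (X i) := by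
        have hfe : (fun ω => (joint Y ω, X i ω))
            = fun ω => ((default : ∀ j : Fin 0, W j), X i ω) := by
          funext ω; rw [hjY]
        rw [hfe, ent_pair_const_left]
      rw [h1, h2]; ring
    have htcL : tcL p X Y = 0 := by
      rw [tcL]; simp [hmi]
    have htcY : tc p Y = 0 := by
      rw [tc]
      have h1 : ent p (joint Y) = 0 := by rw [hjY]; exact ent_const hp1 _
      simp [h1]
    rw [htcL, htcY]
    simpa using tc_nonneg hp0 hp1 X
  · have hstar := rep_ent hp0 (joint X) Y hrep
    have hmcast : ((mm - 1 : ℕ) : ℝ) = (mm : ℝ) - 1 := by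
      rw [Nat.cast_sub hm, Nat.cast_one]
    rw [hmcast] at hstar
    have hcond := tcCond_nonneg hp0 hp1 (joint Y) X
    have hA : ∀ i, ent p (fun ω => (X i ω, joint Y ω))
        = ent p (fun ω => (joint Y ω, X i ω)) :=
      fun i => ent_pair_comm p (X i) (joint Y)
    have hB : ∀ j, ent p (fun ω => (Y j ω, joint X ω))
        = ent p (fun ω => (joint X ω, Y j ω)) :=
      fun j => ent_pair_comm p (Y j) (joint X)
    simp only [tcCond, condEnt, hA, Finset.sum_sub_distrib, Finset.sum_const,
      Finset.card_univ, Fintype.card_fin, nsmul_eq_mul] at hcond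
    have e1 : ∑ i, mi p (joint Y) (X i)
        = (n : ℝ) * ent p (joint Y) + ∑ i, ent p (X i)
          - ∑ i, ent p (fun ω => (joint Y ω, X i ω)) := by
      simp only [mi, Finset.sum_sub_distrib, Finset.sum_add_distrib, Finset.sum_const,
        Finset.card_univ, Fintype.card_fin, nsmul_eq_mul]
    have e2 : ∑ j, mi p (Y j) (joint X)
        = ∑ j, ent p (Y j) + (mm : ℝ) * ent p (joint X)
          - ∑ j, ent p (fun ω => (joint X ω, Y j ω)) := by
      simp only [mi, hB, Finset.sum_sub_distrib, Finset.sum_add_distrib, Finset.sum_const,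
        Finset.card_univ, Fintype.card_fin, nsmul_eq_mul]
    rw [tcL, tc, tc, e1, e2]
    linarith [hstar, hcond]

end Stmt8Aux


/-- Hierarchical Lower Bound on `TC(X)`: if `Y¹,…,Yʳ` is a hierarchical
representation of `X` (here `Y 0 = X`, and each layer `Y (k+1)` is a representation of
the previous layer `Y k` for `k < r`), then `TC(X) ≥ ∑ₖ TC_L(Y^{k-1};Y^k)`. -/
theorem stmt_8 {Ω : Type} [Fintype Ω] (r : ℕ)
    (m : ℕ → ℕ) (W : (k : ℕ) → Fin (m k) → Type)
    [∀ k j, Fintype (W k j)] [∀ k j, DecidableEq (W k j)]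
    (p : Ω → ℝ) (hp0 : ∀ ω, 0 ≤ p ω) (hp1 : ∑ ω, p ω = 1)
    (Y : (k : ℕ) → (j : Fin (m k)) → Ω → W k j)
    (hrep : ∀ k < r, IsRepresentation p (joint (Y k)) (Y (k + 1))) :
    ∑ k ∈ Finset.range r, tcL p (Y k) (Y (k + 1)) ≤ tc p (Y 0) := by
  suffices h : ∀ s ≤ r,
      ∑ k ∈ Finset.range s, tcL p (Y k) (Y (k + 1)) + tc p (Y s) ≤ tc p (Y 0) by
    have h1 := h r le_rfl
    have h2 := Stmt8Aux.tc_nonneg hp0 hp1 (Y r)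
    linarith
  intro s
  induction s with
  | zero => intro _; simp
  | succ s ih =>
    intro hs
    have h1 := ih (le_of_lt (Nat.lt_of_succ_le hs))
    have h2 := Stmt8Aux.layer hp0 hp1 (Y s) (Y (s + 1)) (hrep s (Nat.lt_of_succ_le hs))
    rw [Finset.sum_range_succ]
    linarith
end

section
/- (Free energy equals the objective) Let X = (X_1,...,X_n) be finite-valued with strictly positive joint pmf p(x), let Y be a finite-valued random variable with strictly positive conditional pmf p(y|x), and let α_1,...,α_n be real numbers. Define the marginals p(y) := Σ_x p(x) p(y|x) and p(y|x_i) := Σ_{x̄ : x̄_i = x_i} p(x̄) p(y|x̄) / p(x_i). If for all x and y, p(y|x) = (1/Z(x)) p(y) Π_{i=1}^n ( p(y|x_i)/p(y) )^{α_i}, where Z(x) is the normalizing constant Z(x) = Σ_y p(y) Π_{i=1}^n ( p(y|x_i)/p(y) )^{α_i}, then E_X[ log Z(X) ] = Σ_{i=1}^n α_i I(Y:X_i) − I(Y:X). -/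
open Finset

section helpers

lemma entSum' {Ω α : Type} [Fintype Ω] [Fintype α] [DecidableEq α]
    (p : Ω → ℝ) (f : Ω → α) :
    ent p f = -∑ ω, p ω * Real.log (prob p f (f ω)) := by
  unfold ent
  congr 1
  have h : ∀ a, prob p f a * Real.log (prob p f a)
      = ∑ ω, if f ω = a then p ω * Real.log (prob p f a) else 0 := fun a => by
    rw [prob, Finset.sum_mul]
    exact Finset.sum_congr rfl fun ω _ => by split <;> simp
  simp only [h]
  rw [Finset.sum_comm]
  exact Finset.sum_congr rfl fun ω _ => by simp [Finset.sum_ite_eq]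

lemma miSum' {Ω α β : Type} [Fintype Ω] [Fintype α] [DecidableEq α] [Fintype β] [DecidableEq β]
    (p : Ω → ℝ) (f : Ω → α) (g : Ω → β) :
    mi p f g = ∑ ω, p ω * (Real.log (prob p (fun ω => (f ω, g ω)) (f ω, g ω))
      - Real.log (prob p f (f ω)) - Real.log (prob p g (g ω))) := by
  rw [mi, entSum' p f, entSum' p g, entSum' p (fun ω => (f ω, g ω))]
  rw [sub_neg_eq_add, ← Finset.sum_neg_distrib, ← Finset.sum_neg_distrib,
    ← Finset.sum_add_distrib, ← Finset.sum_add_distrib]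
  exact Finset.sum_congr rfl fun ω _ => by ring

end helpers

/-- Free energy equals the objective: if `p(y|x)` is a fixed point of the
self-consistent equations `p(y|x) = (1/Z(x)) p(y) ∏ᵢ (p(y|xᵢ)/p(y))^{αᵢ}` with `Z(x)` the
normalizing constant, then `E_X[log Z(X)] = ∑ᵢ αᵢ I(Y:Xᵢ) − I(Y:X)`, where all information
quantities are computed under the joint distribution `p(x) p(y|x)`. -/
theorem stmt_12 {n : ℕ} {V : Fin n → Type} [∀ i, Fintype (V i)] [∀ i, DecidableEq (V i)]
    {𝒴 : Type} [Fintype 𝒴] [DecidableEq 𝒴]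
    (p : (∀ i, V i) → ℝ) (hp : ∀ x, 0 < p x) (hp1 : ∑ x, p x = 1)
    (q : (∀ i, V i) → 𝒴 → ℝ) (hq : ∀ x y, 0 < q x y) (hq1 : ∀ x, ∑ y, q x y = 1)
    (α : Fin n → ℝ)
    (pY : 𝒴 → ℝ) (hpY : ∀ y, pY y = ∑ x, p x * q x y)
    (pYxi : ∀ i, V i → 𝒴 → ℝ)
    (hpYxi : ∀ i xi y, pYxi i xi y
      = (∑ x, if x i = xi then p x * q x y else 0) / (∑ x, if x i = xi then p x else 0))
    (Z : (∀ i, V i) → ℝ)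
    (hZ : ∀ x, Z x = ∑ y, pY y * ∏ i, (pYxi i (x i) y / pY y) ^ α i)
    (hfix : ∀ x y, q x y = (1 / Z x) * (pY y * ∏ i, (pYxi i (x i) y / pY y) ^ α i)) :
    ∑ x, p x * Real.log (Z x)
      = (∑ i, α i * mi (fun z : (∀ i, V i) × 𝒴 => p z.1 * q z.1 z.2)
            (fun z => z.2) (fun z => z.1 i))
        - mi (fun z : (∀ i, V i) × 𝒴 => p z.1 * q z.1 z.2)
            (fun z => z.2) (fun z => z.1) := by
  classical
  have hneX : Nonempty (∀ i, V i) := by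
    by_contra h
    rw [not_nonempty_iff] at h
    simp at hp1
  have hneY : Nonempty 𝒴 := by
    obtain ⟨x0⟩ := hneX
    by_contra h
    rw [not_nonempty_iff] at h
    have := hq1 x0
    simp at this
  haveI := hneX; haveI := hneY
  set r : (∀ i, V i) × 𝒴 → ℝ := fun z => p z.1 * q z.1 z.2 with hr
  -- positivity facts
  have hpY0 : ∀ y, 0 < pY y := fun y => by
    rw [hpY]; exact Finset.sum_pos (fun x _ => mul_pos (hp x) (hq x y)) Finset.univ_nonempty
  have hpXi0 : ∀ i xi, 0 < ∑ x, if x i = xi then p x else 0 := by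
    intro i xi
    obtain ⟨x0⟩ := hneX
    refine Finset.sum_pos' (fun x _ => by split <;> [exact (hp _).le; exact le_rfl]) ?_
    refine ⟨Function.update x0 i xi, Finset.mem_univ _, ?_⟩
    rw [if_pos (Function.update_self i xi x0)]
    exact hp _
  have hnum0 : ∀ i xi y, 0 < ∑ x, if x i = xi then p x * q x y else 0 := by
    intro i xi y
    obtain ⟨x0⟩ := hneX
    refine Finset.sum_pos' (fun x _ => by split <;> [exact (mul_pos (hp _) (hq _ _)).le; exact le_rfl]) ?_
    refine ⟨Function.update x0 i xi, Finset.mem_univ _, ?_⟩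
    rw [if_pos (Function.update_self i xi x0)]
    exact mul_pos (hp _) (hq _ _)
  have hpYxi0 : ∀ i xi y, 0 < pYxi i xi y := fun i xi y => by
    rw [hpYxi]; exact div_pos (hnum0 i xi y) (hpXi0 i xi)
  have hZ0 : ∀ x, 0 < Z x := fun x => by
    rw [hZ]
    exact Finset.sum_pos (fun y _ => mul_pos (hpY0 y)
      (Finset.prod_pos fun i _ => Real.rpow_pos_of_pos (div_pos (hpYxi0 i (x i) y) (hpY0 y)) _))
      Finset.univ_nonempty
  -- log identity
  have hlogZ : ∀ x y, Real.log (Z x)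
      = Real.log (pY y) + (∑ i, α i * (Real.log (pYxi i (x i) y) - Real.log (pY y)))
        - Real.log (q x y) := by
    intro x y
    have h1 : Z x * q x y = pY y * ∏ i, (pYxi i (x i) y / pY y) ^ α i := by
      rw [hfix x y]
      field_simp
      rw [mul_assoc]
      exact mul_div_cancel_left₀ _ (hZ0 x).ne'
    have h2 := congrArg Real.log h1
    rw [Real.log_mul (hZ0 x).ne' (hq x y).ne',
        Real.log_mul (hpY0 y).ne'
          (Finset.prod_pos fun i _ => Real.rpow_pos_of_pos (div_pos (hpYxi0 i (x i) y) (hpY0 y)) _).ne',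
        Real.log_prod (fun i _ =>
          (Real.rpow_pos_of_pos (div_pos (hpYxi0 i (x i) y) (hpY0 y)) _).ne')] at h2
    have h3 : ∀ i, Real.log ((pYxi i (x i) y / pY y) ^ α i)
        = α i * (Real.log (pYxi i (x i) y) - Real.log (pY y)) := fun i => by
      rw [Real.log_rpow (div_pos (hpYxi0 i (x i) y) (hpY0 y)),
        Real.log_div (hpYxi0 i (x i) y).ne' (hpY0 y).ne']
    rw [Finset.sum_congr rfl (fun i _ => h3 i)] at h2
    linarith
  -- prob computations
  have hprobY : ∀ y, prob r (fun z => z.2) y = pY y := by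
    intro y
    rw [prob, Fintype.sum_prod_type, hpY]
    exact Finset.sum_congr rfl fun x _ => by simp [hr]
  have hprobX : ∀ x0, prob r (fun z => z.1) x0 = p x0 := by
    intro x0
    rw [prob, Fintype.sum_prod_type]
    have h1 : ∀ x, (∑ y, if (x, y).1 = x0 then r (x, y) else 0) = if x = x0 then p x else 0 := by
      intro x
      by_cases h : x = x0
      · subst h
        simp [hr, ← Finset.mul_sum, hq1]
      · simp [h]
    simp only [h1, Finset.sum_ite_eq', Finset.mem_univ, if_true]
  have hprobYX : ∀ y0 x0, prob r (fun z => (z.2, z.1)) (y0, x0) = p x0 * q x0 y0 := by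
    intro y0 x0
    rw [prob, Fintype.sum_prod_type]
    have h1 : ∀ x, (∑ y, if ((x, y).2, (x, y).1) = (y0, x0) then r (x, y) else 0)
        = if x = x0 then p x * q x y0 else 0 := by
      intro x
      by_cases h : x = x0
      · subst h
        simp [hr, Prod.ext_iff, Finset.sum_ite_eq']
      · simp [Prod.ext_iff, h]
    simp only [h1, Finset.sum_ite_eq', Finset.mem_univ, if_true]
  have hprobXi : ∀ i xi, prob r (fun z => z.1 i) xi = ∑ x, if x i = xi then p x else 0 := by
    intro i xi
    rw [prob, Fintype.sum_prod_type]
    refine Finset.sum_congr rfl fun x _ => ?_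
    by_cases h : x i = xi
    · simp [h, hr, ← Finset.mul_sum, hq1]
    · simp [h]
  have hprobYXi : ∀ i y0 xi, prob r (fun z => (z.2, z.1 i)) (y0, xi)
      = ∑ x, if x i = xi then p x * q x y0 else 0 := by
    intro i y0 xi
    rw [prob, Fintype.sum_prod_type]
    refine Finset.sum_congr rfl fun x _ => ?_
    by_cases h : x i = xi
    · simp [hr, Prod.ext_iff, h, Finset.sum_ite_eq']
    · simp [Prod.ext_iff, h]
  -- mi evaluations
  have hmiX : mi r (fun z => z.2) (fun z => z.1)
      = ∑ x, ∑ y, p x * q x y * (Real.log (q x y) - Real.log (pY y)) := by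
    rw [miSum', Fintype.sum_prod_type]
    refine Finset.sum_congr rfl fun x _ => Finset.sum_congr rfl fun y _ => ?_
    rw [show prob r (fun ω : (∀ i, V i) × 𝒴 => ((fun z : (∀ i, V i) × 𝒴 => z.2) ω,
        (fun z : (∀ i, V i) × 𝒴 => z.1) ω)) ((x, y).2, (x, y).1) = p x * q x y from hprobYX y x,
      hprobY, hprobX]
    show p x * q x y * _ = _
    rw [Real.log_mul (hp x).ne' (hq x y).ne']
    ring
  have hmiXi : ∀ i, mi r (fun z => z.2) (fun z => z.1 i)
      = ∑ x, ∑ y, p x * q x y * (Real.log (pYxi i (x i) y) - Real.log (pY y)) := by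
    intro i
    rw [miSum', Fintype.sum_prod_type]
    refine Finset.sum_congr rfl fun x _ => Finset.sum_congr rfl fun y _ => ?_
    have h1 : prob r (fun ω : (∀ i, V i) × 𝒴 => ((fun z : (∀ i, V i) × 𝒴 => z.2) ω,
        (fun z : (∀ i, V i) × 𝒴 => z.1 i) ω)) ((x, y).2, (x, y).1 i)
        = pYxi i (x i) y * (∑ x', if x' i = x i then p x' else 0) := by
      rw [hprobYXi i y (x i), hpYxi, div_mul_cancel₀ _ (hpXi0 i (x i)).ne']
    rw [h1, hprobY, hprobXi]
    show p x * q x y * _ = _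
    rw [Real.log_mul (hpYxi0 i (x i) y).ne' (hpXi0 i (x i)).ne']
    ring
  -- put it together
  simp only [hmiXi]
  rw [hmiX]
  have hLHS : ∀ x, p x * Real.log (Z x)
      = ∑ y, p x * q x y *
        (Real.log (pY y) + (∑ i, α i * (Real.log (pYxi i (x i) y) - Real.log (pY y)))
          - Real.log (q x y)) := by
    intro x
    have h0 : p x * Real.log (Z x) = ∑ y, q x y * (p x * Real.log (Z x)) := by
      rw [← Finset.sum_mul, hq1, one_mul]
    rw [h0]
    refine Finset.sum_congr rfl fun y _ => ?_
    rw [hlogZ x y]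
    ring
  rw [Finset.sum_congr rfl fun x _ => hLHS x]
  have key : (∑ i, α i * ∑ x, ∑ y, p x * q x y * (Real.log (pYxi i (x i) y) - Real.log (pY y)))
      = ∑ x, ∑ y, p x * q x y * ∑ i, α i * (Real.log (pYxi i (x i) y) - Real.log (pY y)) := by
    simp only [Finset.mul_sum]
    conv_lhs => rw [Finset.sum_comm]
    refine Finset.sum_congr rfl fun x _ => ?_
    rw [Finset.sum_comm]
    exact Finset.sum_congr rfl fun y _ => Finset.sum_congr rfl fun i _ => by ring
  rw [key, ← Finset.sum_sub_distrib]
  refine Finset.sum_congr rfl fun x _ => ?_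
  rw [← Finset.sum_sub_distrib]
  exact Finset.sum_congr rfl fun y _ => by ring
end

section
/- Let Y = (Y_1,...,Y_m) be a representation of X = (X_1,...,X_n), and let α_{i,j} (1 ≤ i ≤ n, 1 ≤ j ≤ m) be nonnegative real numbers satisfying α_{i,j} I(Y_j : X_i) ≤ I(Y_j : X_i | Y_{1:j-1}) for all i, j. Then TC_L(X;Y) ≥ Σ_{j=1}^m ( Σ_{i=1}^n α_{i,j} I(Y_j : X_i) − I(Y_j : X) ). -/
open Finset

lemma prob_comp {Ω α β : Type} [Fintype Ω] [DecidableEq α] [DecidableEq β]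
    (p : Ω → ℝ) (f : Ω → α) (σ : α → β) (hσ : Function.Injective σ) (a : α) :
    prob p (fun ω => σ (f ω)) (σ a) = prob p f a := by
  unfold prob
  exact Finset.sum_congr rfl fun ω _ => by simp [hσ.eq_iff]

lemma ent_comp {Ω α β : Type} [Fintype Ω] [Fintype α] [DecidableEq α] [Fintype β] [DecidableEq β]
    (p : Ω → ℝ) (f : Ω → α) (σ : α → β) (hσ : Function.Injective σ) :
    ent p (fun ω => σ (f ω)) = ent p f := by
  unfold ent
  congr 1
  rw [← Finset.sum_subset (Finset.subset_univ ((Finset.univ : Finset α).image σ))]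
  · rw [Finset.sum_image (fun a _ b _ h => hσ h)]
    exact Finset.sum_congr rfl fun a _ => by rw [prob_comp p f σ hσ]
  · intro b _ hb
    have h0 : prob p (fun ω => σ (f ω)) b = 0 := by
      refine Finset.sum_eq_zero fun ω _ => ?_
      rw [if_neg]
      intro h
      exact hb (Finset.mem_image.2 ⟨f ω, Finset.mem_univ _, h⟩)
    rw [h0]; simp

lemma ent_subsingleton {Ω α : Type} [Fintype Ω] [Fintype α] [DecidableEq α] [Subsingleton α]
    (p : Ω → ℝ) (hp1 : ∑ ω, p ω = 1) (f : Ω → α) : ent p f = 0 := by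
  unfold ent
  have h : ∀ a : α, prob p f a = 1 := fun a => by
    unfold prob
    rw [← hp1]
    exact Finset.sum_congr rfl fun ω _ => by simp [Subsingleton.elim (f ω) a]
  simp [h]

def snocFun {m : ℕ} {W : Fin m → Type} {j : ℕ} (hj : j < m) :
    (W ⟨j, hj⟩ × ∀ k : Fin j, W (Fin.castLE hj.le k)) → ∀ k : Fin (j+1), W (Fin.castLE hj k) :=
  fun wv => Fin.snoc (α := fun k => W (Fin.castLE hj k)) wv.2 wv.1

lemma snocFun_injective {m : ℕ} {W : Fin m → Type} {j : ℕ} (hj : j < m) :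
    Function.Injective (snocFun (W := W) hj) := by
  intro a b h
  have h1 : a.1 = b.1 := by
    have := congrFun h (Fin.last j)
    simpa [snocFun, Fin.snoc_last] using this
  have h2 : a.2 = b.2 := by
    funext k
    have := congrFun h (Fin.castSucc k)
    simpa [snocFun, Fin.snoc_castSucc] using this
  exact Prod.ext h1 h2

lemma snocFun_spec {Ω : Type} {m : ℕ} {W : Fin m → Type} {j : ℕ} (hj : j < m)
    (Y : ∀ j, Ω → W j) (ω : Ω) :
    snocFun hj (Y ⟨j, hj⟩ ω, fun k : Fin j => Y (Fin.castLE hj.le k) ω)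
      = fun k : Fin (j+1) => Y (Fin.castLE hj k) ω := by
  funext k
  refine Fin.lastCases ?_ ?_ k
  · simp [snocFun, Fin.snoc_last]
    rfl
  · intro i
    simp [snocFun, Fin.snoc_castSucc]

lemma chain_rule {Ω : Type} [Fintype Ω] {m : ℕ}
    {W : Fin m → Type} [∀ j, Fintype (W j)] [∀ j, DecidableEq (W j)]
    {β : Type} [Fintype β] [DecidableEq β]
    (p : Ω → ℝ) (hp1 : ∑ ω, p ω = 1) (Y : ∀ j, Ω → W j) (f : Ω → β) :
    ∑ j : Fin m, condMI p (Y j) f (fun ω => fun k : Fin j.val => Y (Fin.castLE j.isLt.le k) ω)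
      = mi p (joint Y) f := by
  classical
  set D : ℕ → ℝ := fun j => if h : j ≤ m then
      (ent p (fun ω => fun k : Fin j => Y (Fin.castLE h k) ω)
       - ent p (fun ω => (f ω, fun k : Fin j => Y (Fin.castLE h k) ω))) else 0 with hD
  have key : ∀ j : Fin m, condMI p (Y j) f
      (fun ω => fun k : Fin j.val => Y (Fin.castLE j.isLt.le k) ω)
      = D (j.val + 1) - D j.val := by
    rintro ⟨j, hj⟩
    have hj1 : j + 1 ≤ m := hj
    have hjle : j ≤ m := hj.le
    rw [hD]
    simp only [dif_pos hj1, dif_pos hjle]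
    unfold condMI condEnt
    have e1 : ent p (fun ω => (Y ⟨j,hj⟩ ω, fun k : Fin j => Y (Fin.castLE hj.le k) ω))
        = ent p (fun ω => fun k : Fin (j+1) => Y (Fin.castLE hj1 k) ω) := by
      rw [← ent_comp p _ (snocFun hj) (snocFun_injective hj)]
      congr 1
      funext ω
      exact snocFun_spec hj Y ω
    have hσ2 : Function.Injective (fun x : (W ⟨j,hj⟩ × β) × (∀ k : Fin j, W (Fin.castLE hj.le k)) =>
        (x.1.2, snocFun hj (x.1.1, x.2))) := by
      intro a b h
      have h1 : a.1.2 = b.1.2 := congrArg Prod.fst h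
      have h2 : ((a.1.1, a.2) : W ⟨j,hj⟩ × (∀ k : Fin j, W (Fin.castLE hj.le k)))
          = (b.1.1, b.2) := snocFun_injective hj (congrArg Prod.snd h)
      obtain ⟨h2a, h2b⟩ := Prod.mk.inj h2
      exact Prod.ext (Prod.ext h2a h1) h2b
    have e2 : ent p (fun ω => ((Y ⟨j,hj⟩ ω, f ω), fun k : Fin j => Y (Fin.castLE hj.le k) ω))
        = ent p (fun ω => (f ω, fun k : Fin (j+1) => Y (Fin.castLE hj1 k) ω)) := by
      rw [← ent_comp p _ _ hσ2]
      congr 1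
      funext ω
      show (f ω, snocFun hj (Y ⟨j,hj⟩ ω, fun k : Fin j => Y (Fin.castLE hj.le k) ω)) = _
      rw [snocFun_spec hj Y ω]
    rw [show (fun ω => fun k : Fin j => Y (Fin.castLE (Fin.mk j hj).isLt.le k) ω)
        = (fun ω => fun k : Fin j => Y (Fin.castLE hj.le k) ω) from rfl]
    rw [e1, e2]
    ring
  rw [Finset.sum_congr rfl (fun j _ => key j),
    Fin.sum_univ_eq_sum_range (fun j => D (j+1) - D j) m, Finset.sum_range_sub]
  have hDm : D m = ent p (joint Y) - ent p (fun ω => (f ω, joint Y ω)) := by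
    rw [hD]; simp only [dif_pos (le_refl m)]
    rfl
  have hswap : ent p (fun ω => (f ω, joint Y ω)) = ent p (fun ω => (joint Y ω, f ω)) := by
    rw [← ent_comp p (fun ω => (f ω, joint Y ω)) Prod.swap Prod.swap_injective]
    rfl
  haveI : Subsingleton (∀ k : Fin 0, W (Fin.castLE (Nat.zero_le m) k)) :=
    ⟨fun a b => funext fun k => k.elim0⟩
  have hD0 : D 0 = - ent p f := by
    rw [hD]; simp only [dif_pos (Nat.zero_le m)]
    rw [ent_subsingleton p hp1]
    have hσ0 : Function.Injective (fun x : β =>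
        (x, (fun k : Fin 0 => k.elim0 : ∀ k : Fin 0, W (Fin.castLE (Nat.zero_le m) k)))) :=
      fun a b h => congrArg Prod.fst h
    have := ent_comp p f _ hσ0
    rw [show (fun ω => (f ω, fun k : Fin 0 => Y (Fin.castLE (Nat.zero_le m) k) ω))
        = (fun ω => (f ω, (fun k : Fin 0 => k.elim0 : ∀ k : Fin 0, W (Fin.castLE (Nat.zero_le m) k)))) from
      funext fun ω => by rw [Subsingleton.elim (fun k : Fin 0 => Y (Fin.castLE (Nat.zero_le m) k) ω)
        (fun k : Fin 0 => k.elim0)]]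
    rw [this]
    ring
  rw [hDm, hD0, hswap]
  unfold mi
  ring

/-- if `Y` is a representation of `X` and the nonnegative reals `α i j`
satisfy `α i j · I(Yⱼ:Xᵢ) ≤ I(Yⱼ:Xᵢ|Y_{1:j-1})` for all `i, j`, then
`TC_L(X;Y) ≥ ∑ⱼ ( ∑ᵢ α i j · I(Yⱼ:Xᵢ) − I(Yⱼ:X) )`. -/
theorem stmt_14 {Ω : Type} [Fintype Ω] {n m : ℕ}
    {V : Fin n → Type} [∀ i, Fintype (V i)] [∀ i, DecidableEq (V i)]
    {W : Fin m → Type} [∀ j, Fintype (W j)] [∀ j, DecidableEq (W j)]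
    (p : Ω → ℝ) (hp0 : ∀ ω, 0 ≤ p ω) (hp1 : ∑ ω, p ω = 1)
    (X : ∀ i, Ω → V i) (Y : ∀ j, Ω → W j)
    (hrep : IsRepresentation p (joint X) Y)
    (α : Fin n → Fin m → ℝ) (hα0 : ∀ i j, 0 ≤ α i j)
    (hαI : ∀ i j, α i j * mi p (Y j) (X i)
      ≤ condMI p (Y j) (X i) (fun ω => fun k : Fin j.val => Y (Fin.castLE j.isLt.le k) ω)) :
    ∑ j, ((∑ i, α i j * mi p (Y j) (X i)) - mi p (Y j) (joint X)) ≤ tcL p X Y := by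
  have hchain : ∀ i, ∑ j : Fin m, condMI p (Y j) (X i)
      (fun ω => fun k : Fin j.val => Y (Fin.castLE j.isLt.le k) ω) = mi p (joint Y) (X i) :=
    fun i => chain_rule p hp1 Y (X i)
  have h1 : ∑ j, ∑ i, α i j * mi p (Y j) (X i) ≤ ∑ i, mi p (joint Y) (X i) := by
    rw [Finset.sum_comm]
    refine Finset.sum_le_sum fun i _ => ?_
    rw [← hchain i]
    exact Finset.sum_le_sum fun j _ => hαI i j
  have h2 : ∑ j, ((∑ i, α i j * mi p (Y j) (X i)) - mi p (Y j) (joint X))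
      = (∑ j, ∑ i, α i j * mi p (Y j) (X i)) - ∑ j, mi p (Y j) (joint X) :=
    Finset.sum_sub_distrib _ _
  rw [h2]
  unfold tcL
  linarith
end

section
/- Let X = (X_1,...,X_n) be finite-valued with strictly positive joint pmf p(x), let Y be finite-valued with strictly positive conditional pmf p(y|x), and let α_1,...,α_n ∈ [0,1]. Then for all strictly positive conditional pmfs q_i(·|y) and strictly positive pmf q_0(y), the functional F[q_1,...,q_n,q_0] := Σ_{x,y} p(x) p(y|x) ( Σ_{i=1}^n α_i log( q_i(x_i|y)/p(x_i) ) − log( p(y|x)/q_0(y) ) ) satisfies F[q_1,...,q_n,q_0] ≤ TC(X). -/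
open Finset

/-- for `α₁,…,αₙ ∈ [0,1]` and any strictly positive conditional pmfs
`qᵢ(·|y)` and strictly positive pmf `q₀`, the functional
`F[q₁,…,qₙ,q₀] = ∑_{x,y} p(x) p(y|x) ( ∑ᵢ αᵢ log(qᵢ(xᵢ|y)/p(xᵢ)) − log(p(y|x)/q₀(y)) )`
satisfies `F ≤ TC(X)`. -/
theorem stmt_17 {n : ℕ} {V : Fin n → Type} [∀ i, Fintype (V i)] [∀ i, DecidableEq (V i)]
    {𝒴 : Type} [Fintype 𝒴] [DecidableEq 𝒴]
    (p : (∀ i, V i) → ℝ) (hp : ∀ x, 0 < p x) (hp1 : ∑ x, p x = 1)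
    (q : (∀ i, V i) → 𝒴 → ℝ) (hq : ∀ x y, 0 < q x y) (hq1 : ∀ x, ∑ y, q x y = 1)
    (α : Fin n → ℝ) (hα : ∀ i, α i ∈ Set.Icc (0 : ℝ) 1)
    (qi : ∀ i, 𝒴 → V i → ℝ) (hqi : ∀ i y xi, 0 < qi i y xi)
    (hqi1 : ∀ i y, ∑ xi, qi i y xi = 1)
    (q0 : 𝒴 → ℝ) (hq0 : ∀ y, 0 < q0 y) (hq01 : ∑ y, q0 y = 1) :
    (∑ x, ∑ y, p x * q x y *
        ((∑ i, α i * Real.log (qi i y (x i) / (∑ x', if x' i = x i then p x' else 0)))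
          - Real.log (q x y / q0 y)))
      ≤ tc p (fun i (x : ∀ i, V i) => x i) := by
  classical
  set X : ∀ i, (∀ i, V i) → V i := fun i x => x i with hX
  -- marginal pmfs
  set P : ∀ i, V i → ℝ := fun i a => ∑ x, if x i = a then p x else 0 with hPdef
  have hne : Nonempty (∀ i, V i) := by
    by_contra h
    rw [not_nonempty_iff] at h
    rw [Finset.univ_eq_empty, Finset.sum_empty] at hp1
    norm_num at hp1
  obtain ⟨x0⟩ := hne
  have hP_pos : ∀ i a, 0 < P i a := by
    intro i a
    have hnn : ∀ x : ∀ i, V i, (0:ℝ) ≤ if x i = a then p x else 0 := by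
      intro x
      split
      · exact (hp x).le
      · exact le_rfl
    apply Finset.sum_pos' (fun x _ => hnn x)
    refine ⟨Function.update x0 i a, Finset.mem_univ _, ?_⟩
    simp [Function.update_self, (hp _)]
  have hP1 : ∀ i, ∑ a, P i a = 1 := by
    intro i
    rw [hPdef]
    simp only []
    rw [Finset.sum_comm]
    simp [Finset.sum_ite_eq, hp1]
  -- compute the total correlation explicitly
  have hprob_joint : ∀ a, prob p (joint X) a = p a := by
    intro a
    rw [prob]
    have hj : ∀ x : ∀ i, V i, joint X x = x := fun x => rfl
    simp_rw [hj]
    simp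
  have hent_joint : ent p (joint X) = -∑ x, p x * Real.log (p x) := by
    simp [ent, hprob_joint]
  have hprob_i : ∀ i a, prob p (X i) a = P i a := fun i a => rfl
  have hent_i : ∀ i, ent p (X i) = -∑ x, p x * Real.log (P i (x i)) := by
    intro i
    rw [ent]
    congr 1
    calc ∑ a, prob p (X i) a * Real.log (prob p (X i) a)
        = ∑ a, ∑ x, (if x i = a then p x * Real.log (P i a) else 0) := by
          refine Finset.sum_congr rfl fun a _ => ?_
          rw [hprob_i, hPdef]
          simp only []
          rw [Finset.sum_mul]
          refine Finset.sum_congr rfl fun x _ => ?_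
          split <;> simp
      _ = ∑ x, ∑ a, (if x i = a then p x * Real.log (P i a) else 0) := Finset.sum_comm
      _ = ∑ x, p x * Real.log (P i (x i)) := by
          refine Finset.sum_congr rfl fun x _ => ?_
          simp [Finset.sum_ite_eq]
  have htc : tc p X = ∑ x, p x * Real.log (p x / ∏ i, P i (x i)) := by
    have e : ∀ x : ∀ i, V i, p x * Real.log (p x / ∏ i, P i (x i))
        = p x * Real.log (p x) - ∑ i, p x * Real.log (P i (x i)) := by
      intro x
      rw [Real.log_div (hp x).ne' (Finset.prod_pos fun i _ => hP_pos i (x i)).ne',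
        Real.log_prod (fun i _ => (hP_pos i (x i)).ne'), mul_sub, Finset.mul_sum]
    rw [tc, hent_joint]
    simp_rw [hent_i, e]
    rw [Finset.sum_sub_distrib,
      show (∑ i : Fin n, -∑ x : (∀ i, V i), p x * Real.log (P i (x i)))
          = -∑ x : (∀ i, V i), ∑ i : Fin n, p x * Real.log (P i (x i)) from by
        rw [Finset.sum_neg_distrib, Finset.sum_comm]]
    ring
  -- the comparison measure r
  set r : (∀ i, V i) → 𝒴 → ℝ :=
    fun x y => q0 y * ∏ i, qi i y (x i) ^ (α i) * P i (x i) ^ (1 - α i) with hrdef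
  have hr_pos : ∀ x y, 0 < r x y := by
    intro x y
    refine mul_pos (hq0 y) (Finset.prod_pos fun i _ => mul_pos ?_ ?_)
    · exact Real.rpow_pos_of_pos (hqi i y (x i)) _
    · exact Real.rpow_pos_of_pos (hP_pos i (x i)) _
  -- pointwise bound
  have hpoint : ∀ x y,
      p x * q x y * ((∑ i, α i * Real.log (qi i y (x i) / P i (x i)))
          - Real.log (q x y / q0 y))
        - p x * q x y * Real.log (p x / ∏ i, P i (x i))
      ≤ r x y - p x * q x y := by
    intro x y
    have hμ : 0 < p x * q x y := mul_pos (hp x) (hq x y)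
    have key : ((∑ i, α i * Real.log (qi i y (x i) / P i (x i)))
          - Real.log (q x y / q0 y)) - Real.log (p x / ∏ i, P i (x i))
        = Real.log (r x y) - Real.log (p x * q x y) := by
      have e1 : ∑ i, α i * Real.log (qi i y (x i) / P i (x i))
          = (∑ i, α i * Real.log (qi i y (x i))) - ∑ i, α i * Real.log (P i (x i)) := by
        rw [← Finset.sum_sub_distrib]
        refine Finset.sum_congr rfl fun i _ => ?_
        rw [Real.log_div (hqi i y (x i)).ne' (hP_pos i (x i)).ne']
        ring
      have e2 : Real.log (r x y)
          = Real.log (q0 y) + ((∑ i, α i * Real.log (qi i y (x i)))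
              + ((∑ i, Real.log (P i (x i))) - ∑ i, α i * Real.log (P i (x i)))) := by
        rw [hrdef]
        simp only []
        rw [Real.log_mul (hq0 y).ne'
          (Finset.prod_pos fun i _ => mul_pos (Real.rpow_pos_of_pos (hqi i y (x i)) _)
            (Real.rpow_pos_of_pos (hP_pos i (x i)) _)).ne',
          Real.log_prod (fun i _ => (mul_pos (Real.rpow_pos_of_pos (hqi i y (x i)) _)
            (Real.rpow_pos_of_pos (hP_pos i (x i)) _)).ne')]
        congr 1
        rw [← Finset.sum_sub_distrib, ← Finset.sum_add_distrib]
        refine Finset.sum_congr rfl fun i _ => ?_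
        rw [Real.log_mul (Real.rpow_pos_of_pos (hqi i y (x i)) _).ne'
          (Real.rpow_pos_of_pos (hP_pos i (x i)) _).ne',
          Real.log_rpow (hqi i y (x i)), Real.log_rpow (hP_pos i (x i))]
        ring
      rw [e1, e2, Real.log_div (hq x y).ne' (hq0 y).ne',
        Real.log_div (hp x).ne' (Finset.prod_pos fun i _ => hP_pos i (x i)).ne',
        Real.log_prod (fun i _ => (hP_pos i (x i)).ne'),
        Real.log_mul (hp x).ne' (hq x y).ne']
      ring
    rw [← mul_sub, key, ← Real.log_div (hr_pos x y).ne' hμ.ne']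
    have hlog := Real.log_le_sub_one_of_pos (div_pos (hr_pos x y) hμ)
    calc p x * q x y * Real.log (r x y / (p x * q x y))
        ≤ p x * q x y * (r x y / (p x * q x y) - 1) :=
          mul_le_mul_of_nonneg_left hlog hμ.le
      _ = r x y - p x * q x y := by
          rw [mul_sub, mul_div_assoc', mul_div_cancel_left₀ _ hμ.ne', mul_one]
  -- total mass of r is at most 1
  have hrsum : ∑ x, ∑ y, r x y ≤ 1 := by
    rw [Finset.sum_comm]
    calc ∑ y, ∑ x, r x y = ∑ y, q0 y * ∑ x : (∀ i, V i), ∏ i,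
          qi i y (x i) ^ (α i) * P i (x i) ^ (1 - α i) := by
          refine Finset.sum_congr rfl fun y _ => ?_
          rw [Finset.mul_sum]
      _ = ∑ y, q0 y * ∏ i, ∑ a : V i, qi i y a ^ (α i) * P i a ^ (1 - α i) := by
          refine Finset.sum_congr rfl fun y _ => ?_
          rw [Finset.prod_univ_sum, Fintype.piFinset_univ]
      _ ≤ ∑ y, q0 y := by
          refine Finset.sum_le_sum fun y _ => ?_
          refine mul_le_of_le_one_right (hq0 y).le ?_
          refine Finset.prod_le_one (fun i _ => Finset.sum_nonneg fun a _ =>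
            mul_nonneg (Real.rpow_nonneg (hqi i y a).le _)
              (Real.rpow_nonneg (hP_pos i a).le _)) (fun i _ => ?_)
          calc ∑ a, qi i y a ^ (α i) * P i a ^ (1 - α i)
              ≤ ∑ a, (α i * qi i y a + (1 - α i) * P i a) := by
                refine Finset.sum_le_sum fun a _ => ?_
                exact Real.geom_mean_le_arith_mean2_weighted (hα i).1
                  (by linarith [(hα i).2]) (hqi i y a).le (hP_pos i a).le (by ring)
            _ = 1 := by
                rw [Finset.sum_add_distrib, ← Finset.mul_sum, ← Finset.mul_sum,
                  hqi1 i y, hP1 i]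
                ring
      _ = 1 := hq01
  -- put everything together
  have htc' : tc p X = ∑ x, ∑ y, p x * q x y * Real.log (p x / ∏ i, P i (x i)) := by
    rw [htc]
    refine Finset.sum_congr rfl fun x _ => ?_
    rw [show (∑ y, p x * q x y * Real.log (p x / ∏ i, P i (x i)))
        = (∑ y, q x y) * (p x * Real.log (p x / ∏ i, P i (x i))) from by
      rw [Finset.sum_mul]; exact Finset.sum_congr rfl fun y _ => by ring, hq1 x]
    ring
  have hμsum : ∑ x, ∑ y, p x * q x y = 1 := by
    calc ∑ x, ∑ y, p x * q x y = ∑ x, p x := by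
          refine Finset.sum_congr rfl fun x _ => ?_
          rw [← Finset.mul_sum, hq1 x, mul_one]
      _ = 1 := hp1
  have main : (∑ x, ∑ y, p x * q x y *
        ((∑ i, α i * Real.log (qi i y (x i) / P i (x i)))
          - Real.log (q x y / q0 y)))
      - tc p X ≤ 0 := by
    rw [htc']
    rw [← Finset.sum_sub_distrib]
    simp_rw [← Finset.sum_sub_distrib]
    calc ∑ x, ∑ y, (p x * q x y *
          ((∑ i, α i * Real.log (qi i y (x i) / P i (x i)))
            - Real.log (q x y / q0 y))
          - p x * q x y * Real.log (p x / ∏ i, P i (x i)))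
        ≤ ∑ x, ∑ y, (r x y - p x * q x y) :=
          Finset.sum_le_sum fun x _ => Finset.sum_le_sum fun y _ => hpoint x y
      _ = (∑ x, ∑ y, r x y) - ∑ x, ∑ y, p x * q x y := by
          rw [← Finset.sum_sub_distrib]
          simp_rw [← Finset.sum_sub_distrib]
      _ ≤ 0 := by rw [hμsum]; linarith [hrsum]
  have hPx : ∀ (x : ∀ i, V i) (i : Fin n),
      (∑ x', if x' i = x i then p x' else 0) = P i (x i) := fun x i => rfl
  simp_rw [hPx]
  linarith [main]
end
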